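/- arXiv:0807.0529 — 10 statements merged into one kernel-verified Lean document; each statement's English description precedes it below -/
import Mathlib

section
/- There exists a real-valued Schwartz function η : ℝ → ℝ such that ∫ η(x) dx = 1 and ∫ xⁿ η(x) dx = 0 for every integer n ≥ 1. That is, the set 𝒜_∞ of Colombeau mollifiers is nonempty. -/
/-!
Take a Schwartz function `ψ : ℝ → ℂ` whose Fourier transform is identically `1` near the origin
(the inverse Fourier transform of a bump function). Differentiating under the integral,
`(𝓕 ψ)⁽ⁿ⁾(0) = (-2πi)ⁿ ∫ xⁿ ψ(x) dx`, so `∫ ψ = 1` and all higher moments of `ψ` vanish.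
Moments against the real weights `xⁿ` commute with taking real parts, so `Re ψ` works.
-/

open MeasureTheory Filter Topology Complex Real
open scoped FourierTransform SchwartzMap

theorem Real.fourier_apply_zero {V E : Type*} [NormedAddCommGroup V] [InnerProductSpace ℝ V]
    [FiniteDimensional ℝ V] [MeasurableSpace V] [BorelSpace V] [NormedAddCommGroup E]
    [NormedSpace ℂ E] (f : V → E) :
    𝓕 f 0 = ∫ v, f v := by
  simp [Real.fourier_eq]

theorem exists_schwartzMap_eventuallyEq_one (E : Type*) [NormedAddCommGroup E]
    [NormedSpace ℝ E] [FiniteDimensional ℝ E] [HasContDiffBump E] :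
    ∃ g : 𝓢(E, ℂ), ⇑g =ᶠ[𝓝 0] 1 := by
  let b : ContDiffBump (0 : E) := ⟨1, 2, one_pos, one_lt_two⟩
  refine ⟨(b.hasCompactSupport.toSchwartzMap b.contDiff).postcompCLM ofRealCLM, ?_⟩
  filter_upwards [b.eventuallyEq_one] with x hx
  simp [hx]

namespace SchwartzMap

theorem integrable_pow_smul {F : Type*} [NormedAddCommGroup F] [NormedSpace ℝ F]
    (f : 𝓢(ℝ, F)) (n : ℕ) : Integrable (fun x : ℝ ↦ x ^ n • f x) := by
  have hg : Function.HasTemperateGrowth (fun x : ℝ ↦ x ^ n) := by fun_prop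
  simpa [smulLeftCLM_apply hg] using (smulLeftCLM F (fun x : ℝ ↦ x ^ n) f).integrable

theorem integral_pow_mul_re (f : 𝓢(ℝ, ℂ)) (n : ℕ) :
    ∫ x : ℝ, x ^ n * f.postcompCLM reCLM x = (∫ x : ℝ, x ^ n • f x).re := by
  rw [← RCLike.re_to_complex, ← integral_re (f.integrable_pow_smul n)]
  simp_rw [postcompCLM_apply, reCLM_apply, RCLike.re_to_complex, Complex.smul_re, smul_eq_mul]

variable {E : Type*} [NormedAddCommGroup E] [NormedSpace ℂ E]

theorem iteratedDeriv_fourier_apply_zero (f : 𝓢(ℝ, E)) (n : ℕ) :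
    iteratedDeriv n (𝓕 ⇑f) 0 = (-2 * π * I) ^ n • ∫ x : ℝ, x ^ n • f x := by
  rw [Real.iteratedDeriv_fourier (N := ⊤) (fun k _ ↦ f.integrable_pow_smul k) le_top,
    Real.fourier_apply_zero, ← integral_smul]
  congr 1 with x
  rw [mul_pow, mul_smul, ← ofReal_pow, Complex.coe_smul]

theorem integral_pow_smul_eq_zero_of_fourier_eventuallyEq_const (f : 𝓢(ℝ, E)) {c : E}
    (hf : 𝓕 ⇑f =ᶠ[𝓝 0] fun _ ↦ c) {n : ℕ} (hn : n ≠ 0) :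
    ∫ x : ℝ, x ^ n • f x = 0 := by
  have h := f.iteratedDeriv_fourier_apply_zero n
  rw [hf.iteratedDeriv_eq, iteratedDeriv_const, if_neg hn, eq_comm, smul_eq_zero] at h
  exact h.resolve_left (pow_ne_zero n (by simp [pi_ne_zero, I_ne_zero]))

end SchwartzMap

/-- There exists a real Schwartz function with `∫ η = 1` whose higher moments all
vanish: the set `𝒜_∞` of Colombeau mollifiers is nonempty. -/
theorem exists_colombeau_mollifier :
    ∃ η : SchwartzMap ℝ ℝ,
      (∫ x : ℝ, η x = 1) ∧ ∀ n : ℕ, 1 ≤ n → ∫ x : ℝ, x ^ n * η x = 0 := by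
  obtain ⟨g, hg⟩ := exists_schwartzMap_eventuallyEq_one ℝ
  set ψ : 𝓢(ℝ, ℂ) := 𝓕⁻ g
  have hψ : 𝓕 ⇑ψ = ⇑g := by
    rw [← SchwartzMap.fourier_coe, FourierInvPair.fourier_fourierInv_eq]
  refine ⟨ψ.postcompCLM reCLM, ?_, fun n hn ↦ ?_⟩
  · simpa [← Real.fourier_apply_zero, hψ, hg.eq_of_nhds] using ψ.integral_pow_mul_re 0
  · rw [ψ.integral_pow_mul_re, ψ.integral_pow_smul_eq_zero_of_fourier_eventuallyEq_const
      (hψ ▸ hg) (Nat.one_le_iff_ne_zero.mp hn), zero_re]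
end

section
/- Let q ∈ ℕ, let η : ℝ → ℝ be a Schwartz function with ∫ η(z) dz = 1 and ∫ zⁿ η(z) dz = 0 for all 1 ≤ n ≤ q, and let f : ℝ → ℝ be a smooth compactly supported function. Then there is a constant C such that for all ε ∈ (0,1) and all x ∈ ℝ, |∫ η(z) f(x + εz) dz − f(x)| ≤ C ε^{q+1}. In other words, the mollified embedding of f differs from f by O(ε^{q+1}) uniformly in x. -/
open MeasureTheory

private lemma taylor_aux : ∀ (q : ℕ) (f : ℝ → ℝ), ContDiff ℝ (⊤ : ℕ∞) f → ∀ M : ℝ,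
    (∀ y, |iteratedDeriv (q + 1) f y| ≤ M) → ∀ x y : ℝ,
    |f y - ∑ n ∈ Finset.range (q + 1), iteratedDeriv n f x * (y - x) ^ n / n.factorial|
      ≤ M * |y - x| ^ (q + 1) / (q + 1).factorial := by
  intro q
  induction q with
  | zero =>
    intro f hf M hM x y
    simp only [zero_add, Finset.sum_range_one, iteratedDeriv_zero, pow_zero,
      Nat.factorial_one, Nat.cast_one, mul_one, div_one, pow_one]
    have := Convex.norm_image_sub_le_of_norm_deriv_le (s := Set.univ) (f := f)
      (fun t _ => hf.differentiable (by simp) t)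
      (fun t _ => by simpa [Real.norm_eq_abs, iteratedDeriv_one] using hM t)
      convex_univ (Set.mem_univ x) (Set.mem_univ y)
    simpa [Real.norm_eq_abs] using this
  | succ q ih =>
    intro f hf M hM x y
    set g := deriv f with hg
    have hgs : ContDiff ℝ (⊤ : ℕ∞) g := (contDiff_infty_iff_deriv.mp hf).2
    have hMg : ∀ t, |iteratedDeriv (q + 1) g t| ≤ M := by
      intro t
      have : iteratedDeriv (q + 1 + 1) f = iteratedDeriv (q + 1) g := iteratedDeriv_succ'
      rw [← this]; exact hM t
    -- the remainder and its derivative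
    set R : ℝ → ℝ := fun t =>
      f t - ∑ n ∈ Finset.range (q + 2), iteratedDeriv n f x * (t - x) ^ n / n.factorial with hR
    set R' : ℝ → ℝ := fun t =>
      g t - ∑ n ∈ Finset.range (q + 1), iteratedDeriv n g x * (t - x) ^ n / n.factorial with hR'
    have hderiv : ∀ t : ℝ, HasDerivAt R (R' t) t := by
      intro t
      have hP : HasDerivAt (fun t => ∑ n ∈ Finset.range (q + 2),
          iteratedDeriv n f x * (t - x) ^ n / n.factorial)
          (∑ n ∈ Finset.range (q + 2),
            iteratedDeriv n f x * ((n : ℝ) * (t - x) ^ (n - 1)) / n.factorial) t := by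
        apply HasDerivAt.fun_sum
        intro n _
        have h1 : HasDerivAt (fun t : ℝ => (t - x) ^ n) ((n : ℝ) * (t - x) ^ (n - 1)) t := by
          simpa using ((hasDerivAt_id t).sub_const x).fun_pow n
        simpa [mul_comm, mul_assoc, mul_div_assoc] using (h1.const_mul
          (iteratedDeriv n f x)).div_const (n.factorial : ℝ)
      have hsum : (∑ n ∈ Finset.range (q + 2),
          iteratedDeriv n f x * ((n : ℝ) * (t - x) ^ (n - 1)) / n.factorial)
          = ∑ n ∈ Finset.range (q + 1), iteratedDeriv n g x * (t - x) ^ n / n.factorial := by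
        rw [Finset.sum_range_succ' (fun n => iteratedDeriv n f x *
          ((n : ℝ) * (t - x) ^ (n - 1)) / n.factorial) (q + 1)]
        simp only [Nat.cast_zero, zero_mul, mul_zero, zero_div, add_zero]
        apply Finset.sum_congr rfl
        intro i _
        have h2 : iteratedDeriv (i + 1) f = iteratedDeriv i g := iteratedDeriv_succ'
        rw [h2, Nat.factorial_succ]
        have h3 : ((i + 1 : ℕ) : ℝ) ≠ 0 := by positivity
        have h4 : (i.factorial : ℝ) ≠ 0 := by positivity
        push_cast
        field_simp
      have hfd : HasDerivAt f (g t) t := (hf.differentiable (by simp) t).hasDerivAt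
      simpa [hR, hR', hsum] using hfd.fun_sub hP
    have hRx : R x = 0 := by
      have h0 : ∑ n ∈ Finset.range (q + 2),
          iteratedDeriv n f x * (x - x) ^ n / n.factorial = f x := by
        rw [Finset.sum_eq_single 0]
        · simp
        · intro n _ hn
          simp [sub_self, zero_pow hn]
        · simp
      show f x - _ = 0
      rw [h0, sub_self]
    have hR'cont : Continuous R' :=
      hgs.continuous.sub (continuous_finset_sum _ fun n _ =>
        (continuous_const.mul ((continuous_id.sub continuous_const).pow n)).div_const _)
    have hFTC : ∫ t in x..y, R' t = R y - R x :=
      intervalIntegral.integral_eq_sub_of_hasDerivAt (fun t _ => hderiv t)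
        (hR'cont.intervalIntegrable x y)
    have key : |R y| ≤ M * |y - x| ^ (q + 2) / (q + 2).factorial := by
      have h1 : |R y| = ‖∫ t in x..y, R' t‖ := by
        rw [hFTC, hRx, sub_zero, Real.norm_eq_abs]
      rw [h1]
      calc ‖∫ t in x..y, R' t‖ ≤ ∫ t in Set.uIoc x y, ‖R' t‖ :=
            intervalIntegral.norm_integral_le_integral_norm_uIoc
        _ ≤ ∫ t in Set.uIoc x y, M * |t - x| ^ (q + 1) / (q + 1).factorial := by
            have hbc : Continuous fun t : ℝ => M * |t - x| ^ (q + 1) / (q + 1).factorial :=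
              ((continuous_const.mul
                (((continuous_id.sub continuous_const).abs).pow (q + 1)))).div_const _
            apply setIntegral_mono_on
            · exact intervalIntegrable_iff.mp (hR'cont.norm.intervalIntegrable x y)
            · exact intervalIntegrable_iff.mp (hbc.intervalIntegrable x y)
            · exact measurableSet_uIoc
            · intro t _
              simpa [Real.norm_eq_abs] using ih g hgs M hMg x t
        _ = M / (q + 1).factorial * ∫ t in Set.uIoc x y, |t - x| ^ (q + 1) := by
            rw [← integral_const_mul]
            apply setIntegral_congr_fun measurableSet_uIoc
            intro t _; ring
        _ = M * |y - x| ^ (q + 2) / (q + 2).factorial := by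
            rw [integral_pow_abs_sub_uIoc, Nat.factorial_succ (q + 1)]
            push_cast
            rw [div_mul_div_comm]
            ring_nf
    have hfin : (q + 1 + 1) = q + 2 := rfl
    simpa [hR, hfin] using key

/-- If `η` is a Schwartz function with `∫ η = 1` whose moments of orders `1,…,q`
vanish, and `f` is smooth with compact support, then the mollified embedding of
`f` differs from `f` by `O(ε^{q+1})` uniformly in `x`. -/
theorem mollified_embedding_smooth_estimate (q : ℕ) (η : SchwartzMap ℝ ℝ)
    (hη1 : ∫ z, η z = 1)
    (hηn : ∀ n : ℕ, 1 ≤ n → n ≤ q → ∫ z, z ^ n * η z = 0)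
    (f : ℝ → ℝ) (hf : ContDiff ℝ (⊤ : ℕ∞) f) (hfc : HasCompactSupport f) :
    ∃ C : ℝ, ∀ ε ∈ Set.Ioo (0 : ℝ) 1, ∀ x : ℝ,
      |(∫ z, η z * f (x + ε * z)) - f x| ≤ C * ε ^ (q + 1) := by
  have hf' : ContDiff ℝ (⊤ : ℕ∞) f := hf.of_le (by simp)
  -- bound on the (q+1)-st derivative
  have hcs : ∀ n : ℕ, HasCompactSupport (iteratedDeriv n f) := by
    intro n
    induction n with
    | zero => simpa using hfc
    | succ n ihn => rw [iteratedDeriv_succ]; exact ihn.deriv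
  obtain ⟨M, hM⟩ := (hcs (q + 1)).exists_bound_of_continuous
    (hf'.continuous_iteratedDeriv (q + 1) (by exact_mod_cast le_top))
  have hM' : ∀ y, |iteratedDeriv (q + 1) f y| ≤ M := by
    intro y; simpa [Real.norm_eq_abs] using hM y
  -- integrability of moments
  have hmom : ∀ n : ℕ, Integrable (fun z : ℝ => z ^ n * η z) := by
    intro n
    refine (η.integrable_pow_mul volume n).mono ?_ ?_
    · exact (continuous_pow n).mul η.continuous |>.aestronglyMeasurable
    · filter_upwards with z
      simp [abs_mul, abs_pow, Real.norm_eq_abs]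
  have hηabs : Integrable (fun z : ℝ => |z| ^ (q + 1) * |η z|) := by
    simpa [Real.norm_eq_abs] using η.integrable_pow_mul volume (q + 1)
  -- bound on f
  obtain ⟨Mf, hMf⟩ := hfc.exists_bound_of_continuous hf.continuous
  set C : ℝ := (∫ z, |z| ^ (q + 1) * |η z|) * M / (q + 1).factorial with hC
  refine ⟨C, ?_⟩
  rintro ε ⟨hε0, hε1⟩ x
  -- integrability
  have hint1 : Integrable (fun z : ℝ => η z * f (x + ε * z)) := by
    have : Integrable (fun z : ℝ => f (x + ε * z) * η z) := by
      apply η.integrable.bdd_mul (c := Mf)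
      · exact (hf.continuous.comp (continuous_const.add (continuous_const.mul continuous_id))).aestronglyMeasurable
      · exact ae_of_all _ (fun z => hMf _)
    simpa [mul_comm] using this
  have hint2 : ∀ n : ℕ, Integrable (fun z : ℝ =>
      η z * (iteratedDeriv n f x * (ε * z) ^ n / n.factorial)) := by
    intro n
    have : Integrable (fun z : ℝ =>
        iteratedDeriv n f x * ε ^ n / n.factorial * (z ^ n * η z)) :=
      (hmom n).const_mul _
    apply this.congr
    filter_upwards with z
    rw [mul_pow]; ring
  have hintP : Integrable (fun z : ℝ => η z * ∑ n ∈ Finset.range (q + 1),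
      iteratedDeriv n f x * (ε * z) ^ n / n.factorial) := by
    have : Integrable (fun z : ℝ => ∑ n ∈ Finset.range (q + 1),
        η z * (iteratedDeriv n f x * (ε * z) ^ n / n.factorial)) :=
      integrable_finset_sum _ (fun n _ => hint2 n)
    apply this.congr
    filter_upwards with z
    rw [Finset.mul_sum]
  -- the Taylor polynomial integrates to f x
  have hPval : (∫ z, η z * ∑ n ∈ Finset.range (q + 1),
      iteratedDeriv n f x * (ε * z) ^ n / n.factorial) = f x := by
    have h1 : (∫ z, η z * ∑ n ∈ Finset.range (q + 1),
        iteratedDeriv n f x * (ε * z) ^ n / n.factorial)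
        = ∑ n ∈ Finset.range (q + 1), ∫ z,
          η z * (iteratedDeriv n f x * (ε * z) ^ n / n.factorial) := by
      rw [← integral_finset_sum _ (fun n _ => hint2 n)]
      congr 1; funext z; rw [Finset.mul_sum]
    rw [h1]
    have h2 : ∀ n ∈ Finset.range (q + 1), (∫ z,
        η z * (iteratedDeriv n f x * (ε * z) ^ n / n.factorial))
        = iteratedDeriv n f x * ε ^ n / n.factorial * ∫ z, z ^ n * η z := by
      intro n _
      rw [← integral_const_mul]
      congr 1; funext z
      rw [mul_pow]; ring
    rw [Finset.sum_congr rfl h2, Finset.sum_eq_single 0]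
    · simp [hη1]
    · intro n hn hn0
      rw [hηn n (Nat.one_le_iff_ne_zero.mpr hn0) (Nat.lt_succ_iff.mp (Finset.mem_range.mp hn)),
        mul_zero]
    · simp
  -- main estimate
  have hsplit : (∫ z, η z * f (x + ε * z)) - f x
      = ∫ z, η z * (f (x + ε * z) - ∑ n ∈ Finset.range (q + 1),
          iteratedDeriv n f x * (ε * z) ^ n / n.factorial) := by
    rw [show (fun z : ℝ => η z * (f (x + ε * z) - ∑ n ∈ Finset.range (q + 1),
        iteratedDeriv n f x * (ε * z) ^ n / n.factorial))
        = fun z : ℝ => η z * f (x + ε * z) - η z * ∑ n ∈ Finset.range (q + 1),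
          iteratedDeriv n f x * (ε * z) ^ n / n.factorial from by funext z; ring,
      integral_sub hint1 hintP, hPval]
  rw [hsplit]
  have hdom : Integrable (fun z : ℝ =>
      |η z| * (M * (|ε| * |z|) ^ (q + 1) / (q + 1).factorial)) := by
    have : Integrable (fun z : ℝ =>
        M * |ε| ^ (q + 1) / (q + 1).factorial * (|z| ^ (q + 1) * |η z|)) :=
      hηabs.const_mul _
    apply this.congr
    filter_upwards with z
    rw [mul_pow]; ring
  calc |∫ z, η z * (f (x + ε * z) - ∑ n ∈ Finset.range (q + 1),
        iteratedDeriv n f x * (ε * z) ^ n / n.factorial)|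
      ≤ ∫ z, |η z| * (M * (|ε| * |z|) ^ (q + 1) / (q + 1).factorial) := by
        rw [← Real.norm_eq_abs]
        apply norm_integral_le_of_norm_le hdom
        filter_upwards with z
        rw [Real.norm_eq_abs, abs_mul]
        apply mul_le_mul_of_nonneg_left _ (abs_nonneg _)
        have := taylor_aux q f hf' M hM' x (x + ε * z)
        simpa [abs_mul, add_sub_cancel_left, mul_pow] using this
    _ = C * ε ^ (q + 1) := by
        rw [hC]
        rw [show (fun z : ℝ => |η z| * (M * (|ε| * |z|) ^ (q + 1) / (q + 1).factorial))
          = fun z : ℝ => M * |ε| ^ (q + 1) / (q + 1).factorial * (|z| ^ (q + 1) * |η z|)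
          from by funext z; rw [mul_pow]; ring, integral_const_mul,
          abs_of_pos hε0]
        ring
end

section
/- Let q ∈ ℕ, let η : ℝ → ℝ be a Schwartz function with ∫ η(z) dz = 1 and ∫ zⁿ η(z) dz = 0 for all 1 ≤ n ≤ q, and let f, g : ℝ → ℝ be smooth compactly supported functions. Then there is a constant C such that for all ε ∈ (0,1) and all x ∈ ℝ, |(∫ η(z) f(x + εz) dz) · (∫ η(z) g(x + εz) dz) − f(x) g(x)| ≤ C ε^{q+1}; i.e., the pointwise product of the mollified embeddings of f and g differs from the ordinary product f·g by O(ε^{q+1}) uniformly in x. -/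
open MeasureTheory
open scoped Nat

lemma my_idw_eq (f : ℝ → ℝ) (hf : ContDiff ℝ (⊤ : ℕ∞) f) (k : ℕ) {s : Set ℝ} (hs : UniqueDiffOn ℝ s)
    {x : ℝ} (hx : x ∈ s) : iteratedDerivWithin k f s x = iteratedDeriv k f x := by
  have h := ((contDiff_iff_ftaylorSeries.mp (hf.of_le ((by simp) : ((⊤:ℕ∞):WithTop ℕ∞) ≤ ((⊤:ℕ∞):WithTop ℕ∞)))).hasFTaylorSeriesUpToOn
    s).eq_iteratedFDerivWithin_of_uniqueDiffOn (m := k) (by exact_mod_cast le_top) hs hx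
  rw [iteratedDerivWithin_eq_iteratedFDerivWithin, iteratedDeriv_eq_iteratedFDeriv, ← h]
  rfl

lemma my_taylor_global (f : ℝ → ℝ) (hf : ContDiff ℝ (⊤ : ℕ∞) f) (q : ℕ) (M : ℝ)
    (hM : ∀ y, |iteratedDeriv (q + 1) f y| ≤ M) (x y : ℝ) :
    |f y - ∑ k ∈ Finset.range (q + 1), (k ! : ℝ)⁻¹ * ((y - x) ^ k * iteratedDeriv k f x)|
      ≤ M * |y - x| ^ (q + 1) / q ! := by
  set h : ℝ := y - x with hh
  set g : ℝ → ℝ := fun t => f (x + h * t) with hg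
  have hgc : ContDiff ℝ (⊤ : ℕ∞) g := by
    apply hf.comp
    fun_prop
  have hgd : ∀ k : ℕ, iteratedDeriv k g = fun t => h ^ k * iteratedDeriv k f (x + h * t) := by
    intro k
    have e1 : iteratedDeriv k (fun z : ℝ => f (x + z)) = fun u => iteratedDeriv k f (x + u) :=
      iteratedDeriv_comp_const_add k f x
    have e2 := iteratedDeriv_comp_const_mul (f := fun z : ℝ => f (x + z)) (n := k)
      (by exact (hf.comp (by fun_prop)).of_le (by exact_mod_cast le_top)) h
    simpa [e1] using e2
  have hub : UniqueDiffOn ℝ (Set.Icc (0:ℝ) 1) := uniqueDiffOn_Icc zero_lt_one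
  have key := taylor_mean_remainder_bound (f := g) (a := 0) (b := 1) (x := 1) (n := q)
    (C := M * |h| ^ (q + 1)) zero_le_one ((hgc.of_le (by exact_mod_cast le_top)).contDiffOn)
    (by constructor <;> norm_num) ?_
  · have e3 : g 1 = f y := by simp [hg, hh]
    have e4 : taylorWithinEval g q (Set.Icc (0:ℝ) 1) 0 1
        = ∑ k ∈ Finset.range (q + 1), (k ! : ℝ)⁻¹ * (h ^ k * iteratedDeriv k f x) := by
      rw [taylor_within_apply]
      apply Finset.sum_congr rfl
      intro k _
      rw [my_idw_eq g hgc k hub (by constructor <;> norm_num), hgd k]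
      simp only [smul_eq_mul, one_pow, mul_one]
      ring
    rw [e3, e4] at key
    calc |f y - ∑ k ∈ Finset.range (q + 1), (k ! : ℝ)⁻¹ * (h ^ k * iteratedDeriv k f x)|
        ≤ M * |h| ^ (q + 1) * (1 - 0) ^ (q + 1) / q ! := key
      _ = M * |h| ^ (q + 1) / q ! := by norm_num
  · intro t ht
    rw [my_idw_eq g hgc (q + 1) hub ht, hgd (q + 1)]
    rw [Real.norm_eq_abs, abs_mul, abs_pow]
    calc |h| ^ (q + 1) * |iteratedDeriv (q + 1) f (x + h * t)| ≤ |h| ^ (q + 1) * M :=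
          mul_le_mul_of_nonneg_left (hM _) (by positivity)
      _ = M * |h| ^ (q + 1) := mul_comm _ _

lemma my_integrable_pow_mul (η : SchwartzMap ℝ ℝ) (k : ℕ) :
    Integrable (fun z : ℝ => z ^ k * η z) := by
  refine (η.integrable_pow_mul volume k).mono' ?_ ?_
  · exact ((continuous_pow k).mul η.continuous).aestronglyMeasurable
  · refine Filter.Eventually.of_forall fun z => ?_
    simp [abs_mul, abs_pow]

lemma my_integrable_comp (η : SchwartzMap ℝ ℝ) {f : ℝ → ℝ} (hf : Continuous f)
    {Mf : ℝ} (hMf : ∀ y, |f y| ≤ Mf) (x ε : ℝ) :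
    Integrable (fun z : ℝ => η z * f (x + ε * z)) := by
  refine ((η.integrable).norm.const_mul Mf).mono' ?_ ?_
  · exact (η.continuous.mul (hf.comp (by fun_prop))).aestronglyMeasurable
  · refine Filter.Eventually.of_forall fun z => ?_
    rw [Real.norm_eq_abs, abs_mul]
    calc |η z| * |f (x + ε * z)| ≤ |η z| * Mf :=
          mul_le_mul_of_nonneg_left (hMf _) (abs_nonneg _)
      _ = Mf * ‖η z‖ := by rw [Real.norm_eq_abs]; ring

lemma my_mollifier_est (q : ℕ) (η : SchwartzMap ℝ ℝ) (hη1 : ∫ z, η z = 1)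
    (hηn : ∀ n : ℕ, 1 ≤ n → n ≤ q → ∫ z, z ^ n * η z = 0)
    (f : ℝ → ℝ) (hf : ContDiff ℝ (⊤ : ℕ∞) f) (hfc : HasCompactSupport f) :
    ∃ C : ℝ, 0 ≤ C ∧ ∀ ε ∈ Set.Ioo (0:ℝ) 1, ∀ x : ℝ,
      |(∫ z, η z * f (x + ε * z)) - f x| ≤ C * ε ^ (q + 1) := by
  -- bound on |f|
  obtain ⟨Mf, hMf⟩ := hfc.exists_bound_of_continuous hf.continuous
  simp only [Real.norm_eq_abs] at hMf
  -- bound on the (q+1)-st derivative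
  obtain ⟨M, hM0⟩ := (hfc.iteratedFDeriv (q + 1)).exists_bound_of_continuous
    (hf.continuous_iteratedFDeriv (by exact_mod_cast le_top))
  have hM : ∀ y, |iteratedDeriv (q + 1) f y| ≤ M := by
    intro y
    rw [iteratedDeriv_eq_iteratedFDeriv, ← Real.norm_eq_abs]
    calc ‖(iteratedFDeriv ℝ (q+1) f y : (Fin (q+1) → ℝ) → ℝ) fun _ => 1‖
        ≤ ‖iteratedFDeriv ℝ (q+1) f y‖ * ∏ _i : Fin (q+1), ‖(1:ℝ)‖ :=
          (iteratedFDeriv ℝ (q+1) f y).le_opNorm _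
      _ ≤ M := by simpa using hM0 y
  have hMnn : 0 ≤ M := le_trans (abs_nonneg _) (hM 0)
  set I : ℝ := ∫ z : ℝ, ‖z‖ ^ (q + 1) * ‖η z‖ with hI
  have hInn : 0 ≤ I := integral_nonneg fun z => by positivity
  refine ⟨M / q ! * I, by positivity, ?_⟩
  rintro ε ⟨hε0, hε1⟩ x
  set P : ℝ → ℝ := fun z =>
    ∑ k ∈ Finset.range (q + 1), (k ! : ℝ)⁻¹ * ((ε * z) ^ k * iteratedDeriv k f x) with hP
  -- integral of η * P equals f x
  have hsum : ∀ z : ℝ, η z * P z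
      = ∑ k ∈ Finset.range (q + 1),
          ((k ! : ℝ)⁻¹ * ε ^ k * iteratedDeriv k f x) * (z ^ k * η z) := by
    intro z
    rw [hP, Finset.mul_sum]
    apply Finset.sum_congr rfl
    intro k _
    rw [mul_pow]
    ring
  have hPint : Integrable (fun z : ℝ => η z * P z) := by
    rw [funext hsum]
    exact integrable_finset_sum _ fun k _ => (my_integrable_pow_mul η k).const_mul _
  have hIP : (∫ z, η z * P z) = f x := by
    rw [funext hsum, integral_finset_sum _ fun k _ => (my_integrable_pow_mul η k).const_mul _]
    have : ∀ k ∈ Finset.range (q + 1),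
        (∫ z, ((k ! : ℝ)⁻¹ * ε ^ k * iteratedDeriv k f x) * (z ^ k * η z))
          = if k = 0 then f x else 0 := by
      intro k hk
      rw [integral_const_mul]
      rcases Nat.eq_zero_or_pos k with rfl | hk1
      · simp only [if_pos rfl]
        simp only [pow_zero, one_mul, Nat.factorial_zero, Nat.cast_one, inv_one,
          iteratedDeriv_zero]
        rw [hη1]
        simp
      · rw [if_neg (Nat.pos_iff_ne_zero.mp hk1), hηn k hk1 (Nat.lt_succ_iff.mp
          (Finset.mem_range.mp hk)), mul_zero]
    rw [Finset.sum_congr rfl this]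
    simp
  have hfint : Integrable (fun z : ℝ => η z * f (x + ε * z)) :=
    my_integrable_comp η hf.continuous hMf x ε
  set R : ℝ → ℝ := fun z => η z * (f (x + ε * z) - P z) with hR
  have hRint : Integrable R := by
    apply (hfint.sub hPint).congr
    refine Filter.Eventually.of_forall fun z => ?_
    simp only [Pi.sub_apply, hR]
    ring
  have split : (∫ z, η z * f (x + ε * z)) - f x = ∫ z, R z := by
    rw [← hIP, ← integral_sub hfint hPint]
    congr 1
    funext z
    simp only [Pi.sub_apply, hR]
    ring
  rw [split]
  have hbound : ∀ z : ℝ, ‖R z‖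
      ≤ (M / q ! * ε ^ (q + 1)) * (‖z‖ ^ (q + 1) * ‖η z‖) := by
    intro z
    rw [hR, Real.norm_eq_abs, abs_mul]
    have ht := my_taylor_global f hf q M hM x (x + ε * z)
    have he : x + ε * z - x = ε * z := by ring
    rw [he] at ht
    have hP' : P z = ∑ k ∈ Finset.range (q + 1),
        (k ! : ℝ)⁻¹ * ((ε * z) ^ k * iteratedDeriv k f x) := rfl
    rw [← hP'] at ht
    calc |η z| * |f (x + ε * z) - P z| ≤ |η z| * (M * |ε * z| ^ (q + 1) / q !) :=
          mul_le_mul_of_nonneg_left ht (abs_nonneg _)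
      _ = (M / q ! * ε ^ (q + 1)) * (‖z‖ ^ (q + 1) * ‖η z‖) := by
          rw [abs_mul, mul_pow, abs_of_pos hε0, Real.norm_eq_abs, Real.norm_eq_abs]
          ring
  calc |∫ z, R z|
      ≤ ∫ z, ‖R z‖ := by
        rw [← Real.norm_eq_abs]; exact norm_integral_le_integral_norm _
    _ ≤ ∫ z, (M / q ! * ε ^ (q + 1)) * (‖z‖ ^ (q + 1) * ‖η z‖) :=
        integral_mono hRint.norm
          ((η.integrable_pow_mul volume (q + 1)).const_mul _) hbound
    _ = M / q ! * I * ε ^ (q + 1) := by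
        rw [integral_const_mul, ← hI]
        ring

/-- If `η` is a Schwartz function with `∫ η = 1` whose moments of orders `1,…,q`
vanish, and `f`, `g` are smooth with compact support, then the pointwise product
of the mollified embeddings of `f` and `g` differs from `f·g` by `O(ε^{q+1})`
uniformly in `x`. -/
theorem mollified_embedding_product_estimate (q : ℕ) (η : SchwartzMap ℝ ℝ)
    (hη1 : ∫ z, η z = 1)
    (hηn : ∀ n : ℕ, 1 ≤ n → n ≤ q → ∫ z, z ^ n * η z = 0)
    (f g : ℝ → ℝ) (hf : ContDiff ℝ (⊤ : ℕ∞) f) (hfc : HasCompactSupport f)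
    (hg : ContDiff ℝ (⊤ : ℕ∞) g) (hgc : HasCompactSupport g) :
    ∃ C : ℝ, ∀ ε ∈ Set.Ioo (0 : ℝ) 1, ∀ x : ℝ,
      |(∫ z, η z * f (x + ε * z)) * (∫ z, η z * g (x + ε * z)) - f x * g x|
        ≤ C * ε ^ (q + 1) := by
  obtain ⟨Cf, hCf0, hCf⟩ := my_mollifier_est q η hη1 hηn f hf hfc
  obtain ⟨Cg, hCg0, hCg⟩ := my_mollifier_est q η hη1 hηn g hg hgc
  obtain ⟨Mf, hMf⟩ := hfc.exists_bound_of_continuous hf.continuous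
  obtain ⟨Mg, hMg⟩ := hgc.exists_bound_of_continuous hg.continuous
  simp only [Real.norm_eq_abs] at hMf hMg
  have hMf0 : 0 ≤ Mf := le_trans (abs_nonneg _) (hMf 0)
  have hMg0 : 0 ≤ Mg := le_trans (abs_nonneg _) (hMg 0)
  set K : ℝ := ∫ z : ℝ, ‖η z‖ with hK
  have hK0 : 0 ≤ K := integral_nonneg fun z => norm_nonneg _
  refine ⟨Mf * K * Cg + Mg * Cf, ?_⟩
  rintro ε hε x
  set A : ℝ := ∫ z, η z * f (x + ε * z) with hA
  set B : ℝ := ∫ z, η z * g (x + ε * z) with hB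
  have hAbd : |A| ≤ Mf * K := by
    have habs : |A| = ‖A‖ := (Real.norm_eq_abs A).symm
    rw [habs, hA]
    calc ‖∫ z, η z * f (x + ε * z)‖ ≤ ∫ z, ‖η z * f (x + ε * z)‖ :=
          norm_integral_le_integral_norm _
      _ ≤ ∫ z, Mf * ‖η z‖ := by
          apply integral_mono (my_integrable_comp η hf.continuous hMf x ε).norm
            ((η.integrable).norm.const_mul Mf)
          intro z
          simp only [Real.norm_eq_abs, abs_mul]
          calc |η z| * |f (x + ε * z)| ≤ |η z| * Mf :=
                mul_le_mul_of_nonneg_left (hMf _) (abs_nonneg _)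
            _ = Mf * ‖η z‖ := by rw [Real.norm_eq_abs]; ring
      _ = Mf * K := by rw [integral_const_mul]
  have h1 := hCf ε hε x
  have h2 := hCg ε hε x
  have hεp : 0 < ε ^ (q + 1) := pow_pos hε.1 _
  have key : A * B - f x * g x = A * (B - g x) + g x * (A - f x) := by ring
  rw [key]
  calc |A * (B - g x) + g x * (A - f x)|
      ≤ |A * (B - g x)| + |g x * (A - f x)| := abs_add_le _ _
    _ = |A| * |B - g x| + |g x| * |A - f x| := by rw [abs_mul, abs_mul]
    _ ≤ (Mf * K) * (Cg * ε ^ (q + 1)) + Mg * (Cf * ε ^ (q + 1)) := by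
        apply add_le_add
        · exact mul_le_mul hAbd h2 (abs_nonneg _) (by positivity)
        · exact mul_le_mul (hMg x) h1 (abs_nonneg _) hMg0
    _ = (Mf * K * Cg + Mg * Cf) * ε ^ (q + 1) := by ring
end

section
/- Let m ≥ 1, let η : ℝ → ℝ be a Schwartz function with ∫ η(z) dz = 1 and ∫ zⁿ η(z) dz = 0 for all 1 ≤ n ≤ m − 1, and let f : ℝ → ℝ be a compactly supported m-times continuously differentiable function. Then there is a constant C such that for all ε ∈ (0,1) and all x ∈ ℝ, |∫ η(z) f(x + εz) dz − f(x)| ≤ C ε^{m}. -/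
/-!
Expand `f (x + ε z)` to order `m - 1` around `x`. Since `η` has unit mass and vanishing moments
of orders `1, …, m - 1`, the Taylor polynomial integrates against `η` to exactly `f x`, while the
Lagrange remainder is at most `sup |f⁽ᵐ⁾| (ε |z|)ᵐ / m!`; the `m`-th absolute moment of the
Schwartz function `η` is finite, so the error is `O(εᵐ)` uniformly in `x`.
-/

open MeasureTheory Set Nat

theorem HasCompactSupport.exists_norm_iteratedDeriv_le {𝕜 E : Type*} [NontriviallyNormedField 𝕜]
    [NormedAddCommGroup E] [NormedSpace 𝕜 E] {f : 𝕜 → E} {m : ℕ} (hfc : HasCompactSupport f)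
    (hf : ContDiff 𝕜 m f) : ∃ M, ∀ t, ‖iteratedDeriv m f t‖ ≤ M := by
  obtain ⟨M, hM⟩ := (hfc.iteratedFDeriv m).exists_bound_of_continuous
    (hf.continuous_iteratedFDeriv le_rfl)
  exact ⟨M, fun t => by rw [← norm_iteratedFDeriv_eq_norm_iteratedDeriv]; exact hM t⟩

theorem taylorWithinEval_univ_add_mul (f : ℝ → ℝ) (n : ℕ) (x ε z : ℝ) :
    taylorWithinEval f n univ x (x + ε * z) =
      ∑ k ∈ Finset.range (n + 1), ε ^ k / k ! * iteratedDeriv k f x * z ^ k := by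
  simp only [taylor_within_apply, iteratedDerivWithin_univ, add_sub_cancel_left, smul_eq_mul]
  exact Finset.sum_congr rfl fun k _ => by ring

theorem abs_sub_taylorWithinEval_univ_le {f : ℝ → ℝ} {n : ℕ} (hf : ContDiff ℝ (n + 1) f)
    {M : ℝ} (hM : ∀ t, |iteratedDeriv (n + 1) f t| ≤ M) (x y : ℝ) :
    |f y - taylorWithinEval f n univ x y| ≤ M * |y - x| ^ (n + 1) / (n + 1)! := by
  rcases eq_or_ne x y with rfl | hxy
  · simp only [taylorWithinEval_self, sub_self, abs_zero]
    have := (abs_nonneg _).trans (hM x)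
    positivity
  obtain ⟨t, -, ht⟩ := taylor_mean_remainder_lagrange_iteratedDeriv hxy hf.contDiffOn
  have hpoly : taylorWithinEval f n (uIcc x y) x y = taylorWithinEval f n univ x y := by
    simp only [taylor_within_apply, iteratedDerivWithin_univ]
    refine Finset.sum_congr rfl fun k hk => ?_
    rw [iteratedDerivWithin_eq_iteratedDeriv (uniqueDiffOn_uIcc hxy)
      (hf.contDiffAt.of_le (mod_cast (Finset.mem_range.1 hk).le)) left_mem_uIcc]
  rw [← hpoly, ht, abs_div, abs_mul, abs_pow, Nat.abs_cast]
  gcongr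
  exact hM t

theorem SchwartzMap.integrable_pow_mul_apply (η : SchwartzMap ℝ ℝ) (k : ℕ) :
    Integrable fun z => z ^ k * η z := by
  refine (η.integrable_pow_mul volume k).mono' (by fun_prop) (ae_of_all _ fun z => ?_)
  simp

section Moments

variable {η : ℝ → ℝ} {n : ℕ}

theorem MeasureTheory.Integrable.mul_const_mul_pow {k : ℕ}
    (hη : Integrable fun z => z ^ k * η z) (c : ℝ) : Integrable fun z => η z * (c * z ^ k) :=
  (hη.const_mul c).congr (ae_of_all _ fun z => by ring)

theorem integrable_mul_sum_pow (hη : ∀ k ≤ n, Integrable fun z => z ^ k * η z) (a : ℕ → ℝ) :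
    Integrable fun z => η z * ∑ k ∈ Finset.range (n + 1), a k * z ^ k := by
  simp_rw [Finset.mul_sum]
  exact integrable_finsetSum _ fun k hk =>
    (hη k (Finset.mem_range_succ_iff.1 hk)).mul_const_mul_pow (a k)

theorem integral_mul_sum_pow_of_moments (hη : ∀ k ≤ n, Integrable fun z => z ^ k * η z)
    (h0 : ∫ z, η z = 1) (hmom : ∀ k, 1 ≤ k → k ≤ n → ∫ z, z ^ k * η z = 0) (a : ℕ → ℝ) :
    ∫ z, η z * ∑ k ∈ Finset.range (n + 1), a k * z ^ k = a 0 := by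
  have hterm (k : ℕ) : ∫ z, η z * (a k * z ^ k) = a k * ∫ z, z ^ k * η z := by
    rw [← integral_const_mul]; congr 1; ext z; ring
  simp_rw [Finset.mul_sum]
  rw [integral_finsetSum _ fun k hk =>
    (hη k (Finset.mem_range_succ_iff.1 hk)).mul_const_mul_pow (a k), Finset.sum_range_succ']
  simp only [hterm]
  rw [Finset.sum_eq_zero fun k hk => by
    rw [hmom (k + 1) k.succ_pos (Finset.mem_range.1 hk), mul_zero]]
  simp [h0]

end Moments

/-- If `η` is a Schwartz function with `∫ η = 1` whose moments of orders
`1,…,m−1` vanish, and `f` is a compactly supported `Cᵐ` function (`m ≥ 1`), then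
the mollified embedding of `f` differs from `f` by `O(εᵐ)` uniformly in `x`. -/
theorem mollified_embedding_Cm_estimate (m : ℕ) (hm : 1 ≤ m)
    (η : SchwartzMap ℝ ℝ) (hη1 : ∫ z, η z = 1)
    (hηn : ∀ n : ℕ, 1 ≤ n → n ≤ m - 1 → ∫ z, z ^ n * η z = 0)
    (f : ℝ → ℝ) (hf : ContDiff ℝ m f) (hfc : HasCompactSupport f) :
    ∃ C : ℝ, ∀ ε ∈ Set.Ioo (0 : ℝ) 1, ∀ x : ℝ,
      |(∫ z, η z * f (x + ε * z)) - f x| ≤ C * ε ^ m := by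
  obtain ⟨n, rfl⟩ : ∃ n, m = n + 1 := ⟨m - 1, by omega⟩
  obtain ⟨M, hM⟩ := hfc.exists_norm_iteratedDeriv_le hf
  obtain ⟨B, hB⟩ := hf.continuous.bounded_above_of_compact_support hfc
  have hmom (k : ℕ) (_ : k ≤ n) := η.integrable_pow_mul_apply k
  refine ⟨M / (n + 1)! * ∫ z, |z| ^ (n + 1) * |η z|, fun ε hε x => ?_⟩
  set T : ℝ → ℝ := fun z =>
    ∑ k ∈ Finset.range (n + 1), ε ^ k / k ! * iteratedDeriv k f x * z ^ k
  have hT : ∫ z, η z * T z = f x := by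
    rw [integral_mul_sum_pow_of_moments hmom hη1 (by simpa using hηn)]
    simp
  have hR (z : ℝ) : ‖η z * (f (x + ε * z) - T z)‖ ≤
      M / (n + 1)! * ε ^ (n + 1) * (|z| ^ (n + 1) * |η z|) := by
    have := abs_sub_taylorWithinEval_univ_le hf hM x (x + ε * z)
    rw [taylorWithinEval_univ_add_mul, add_sub_cancel_left, abs_mul ε, abs_of_pos hε.1,
      mul_pow] at this
    rw [Real.norm_eq_abs, abs_mul]
    calc |η z| * |f (x + ε * z) - T z|
        ≤ |η z| * (M * (ε ^ (n + 1) * |z| ^ (n + 1)) / (n + 1)!) :=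
          mul_le_mul_of_nonneg_left this (abs_nonneg _)
      _ = M / (n + 1)! * ε ^ (n + 1) * (|z| ^ (n + 1) * |η z|) := by ring
  have hfε : Integrable fun z => η z * f (x + ε * z) :=
    η.integrable.mul_bdd (by fun_prop) (ae_of_all _ fun z => hB _)
  calc |(∫ z, η z * f (x + ε * z)) - f x| = ‖∫ z, η z * (f (x + ε * z) - T z)‖ := by
        simp_rw [mul_sub]
        rw [integral_sub hfε (integrable_mul_sum_pow hmom _), hT, Real.norm_eq_abs]
    _ ≤ ∫ z, M / (n + 1)! * ε ^ (n + 1) * (|z| ^ (n + 1) * |η z|) :=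
        norm_integral_le_of_norm_le
          (Integrable.const_mul (by simpa using η.integrable_pow_mul volume (n + 1)) _)
          (ae_of_all _ hR)
    _ = M / (n + 1)! * (∫ z, |z| ^ (n + 1) * |η z|) * ε ^ (n + 1) := by
        rw [integral_const_mul]; ring
end

section
/- Let η : ℝ → ℝ be a Schwartz function and ε > 0. The function x ↦ ∫ η(z) |x + εz| dz is twice differentiable on ℝ and its second derivative equals (2/ε) η(−x/ε) for every x ∈ ℝ; that is, the second derivative of the mollified embedding of |x| equals twice the mollified embedding of the Dirac delta. -/
/-!
Writing `|t| = t - 2 min(t, 0)` and noting that `x + εz ≤ 0` exactly when `z ≤ -x/ε`, the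
mollified `|x|` becomes `x ∫η + ε ∫zη - 2 (x A(-x/ε) + ε B(-x/ε))`, where `A` and `B` are the
primitives `s ↦ ∫_{z ≤ s} η` and `s ↦ ∫_{z ≤ s} zη`. Differentiating, the two terms coming from
the moving endpoint cancel, leaving `∫η - 2 A(-x/ε)`, whose derivative is `(2/ε) η(-x/ε)`.
-/

open MeasureTheory Set

theorem hasDerivAt_setIntegral_Iic {E : Type*} [NormedAddCommGroup E] [NormedSpace ℝ E]
    [CompleteSpace E] {f : ℝ → E} (hf : Integrable f) {t : ℝ} (ht : ContinuousAt f t) :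
    HasDerivAt (fun u => ∫ z in Iic u, f z) (f t) t := by
  have hsplit : (fun u => ∫ z in Iic u, f z)
      = fun u => (∫ z in Iic 0, f z) + ∫ z in (0 : ℝ)..u, f z := by
    funext u
    rw [← intervalIntegral.integral_Iic_sub_Iic hf.integrableOn hf.integrableOn, add_sub_cancel]
  rw [hsplit]
  exact (intervalIntegral.integral_hasDerivAt_right hf.intervalIntegrable
    hf.aestronglyMeasurable.stronglyMeasurableAtFilter ht).const_add _

theorem SchwartzMap.integrable_id_mul (η : SchwartzMap ℝ ℝ) : Integrable (fun z => z * η z) :=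
  (integrable_norm_iff (continuous_id.mul η.continuous).aestronglyMeasurable).1 <| by
    simpa [norm_mul] using η.integrable_pow_mul volume 1

section

variable {f : ℝ → ℝ} {ε : ℝ}

theorem hasDerivAt_setIntegral_Iic_neg_div (hf : Integrable f) {x : ℝ}
    (hx : ContinuousAt f (-x / ε)) :
    HasDerivAt (fun x => ∫ z in Iic (-x / ε), f z) (-f (-x / ε) / ε) x := by
  have hs : HasDerivAt (fun x : ℝ => -x / ε) (-1 / ε) x := (hasDerivAt_neg x).div_const ε
  refine ((hasDerivAt_setIntegral_Iic hf hx).scomp x hs).congr_deriv ?_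
  rw [smul_eq_mul]
  ring

theorem integral_mul_add_mul {μ : Measure ℝ} (hf : Integrable f μ)
    (hzf : Integrable (fun z => z * f z) μ) (x ε : ℝ) :
    ∫ z, f z * (x + ε * z) ∂μ = x * (∫ z, f z ∂μ) + ε * ∫ z, z * f z ∂μ := by
  have hexpand : (fun z => f z * (x + ε * z)) = fun z => x * f z + ε * (z * f z) := by
    funext z; ring
  rw [hexpand, integral_add (hf.const_mul x) (hzf.const_mul ε), integral_const_mul,
    integral_const_mul]

theorem mul_abs_add_mul_eq_sub_indicator (hε : 0 < ε) (x z : ℝ) :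
    f z * |x + ε * z|
      = f z * (x + ε * z) - 2 * (Iic (-x / ε)).indicator (fun z => f z * (x + ε * z)) z := by
  by_cases hz : z ≤ -x / ε
  · have hneg : x + ε * z ≤ 0 := by
      rw [le_div_iff₀ hε] at hz; linarith
    rw [indicator_of_mem (mem_Iic.2 hz), abs_of_nonpos hneg]; ring
  · have hpos : 0 ≤ x + ε * z := by
      rw [not_le, div_lt_iff₀ hε] at hz; linarith
    rw [indicator_of_notMem (mt mem_Iic.1 hz), abs_of_nonneg hpos]; ring

theorem integral_mul_abs_add_mul (hf : Integrable f) (hzf : Integrable (fun z => z * f z))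
    (hε : 0 < ε) (x : ℝ) :
    ∫ z, f z * |x + ε * z|
      = x * (∫ z, f z) + ε * (∫ z, z * f z)
        - 2 * (x * (∫ z in Iic (-x / ε), f z) + ε * ∫ z in Iic (-x / ε), z * f z) := by
  have hg : Integrable (fun z => f z * (x + ε * z)) :=
    ((hf.const_mul x).add (hzf.const_mul ε)).congr
      (Filter.Eventually.of_forall fun z => by simp only [Pi.add_apply]; ring)
  simp_rw [mul_abs_add_mul_eq_sub_indicator hε x]
  rw [integral_sub hg ((hg.indicator measurableSet_Iic).const_mul 2), integral_const_mul,
    integral_indicator measurableSet_Iic, integral_mul_add_mul hf hzf,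
    integral_mul_add_mul hf.integrableOn hzf.integrableOn]

theorem hasDerivAt_integral_mul_abs_add_mul (hf : Integrable f)
    (hzf : Integrable (fun z => z * f z)) (hε : 0 < ε) {x : ℝ} (hx : ContinuousAt f (-x / ε)) :
    HasDerivAt (fun x => ∫ z, f z * |x + ε * z|) ((∫ z, f z) - 2 * ∫ z in Iic (-x / ε), f z) x := by
  have hA := hasDerivAt_setIntegral_Iic_neg_div hf hx
  have hB := hasDerivAt_setIntegral_Iic_neg_div hzf (continuousAt_id.mul hx)
  rw [funext (integral_mul_abs_add_mul hf hzf hε)]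
  refine ((((hasDerivAt_id' x).mul_const _).add_const _).sub
    ((((hasDerivAt_id' x).mul hA).add (hB.const_mul ε)).const_mul 2)).congr_deriv ?_
  field_simp
  ring

theorem hasDerivAt_const_sub_two_mul_setIntegral_Iic (c : ℝ) (hf : Integrable f) {x : ℝ}
    (hx : ContinuousAt f (-x / ε)) :
    HasDerivAt (fun x => c - 2 * ∫ z in Iic (-x / ε), f z) (2 / ε * f (-x / ε)) x := by
  refine (((hasDerivAt_setIntegral_Iic_neg_div hf hx).const_mul 2).const_sub c).congr_deriv ?_
  ring

end

/-- For a Schwartz function `η` and `ε > 0`, the mollified embedding of `|x|`,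
`F(x) = ∫ η(z) |x + εz| dz`, is twice differentiable and its second derivative
equals `(2/ε) η(−x/ε)`, i.e. twice the embedded Dirac delta. -/
theorem second_deriv_mollified_abs (η : SchwartzMap ℝ ℝ) (ε : ℝ) (hε : 0 < ε) :
    (∀ x : ℝ,
      DifferentiableAt ℝ (fun x : ℝ => ∫ z, η z * |x + ε * z|) x ∧
      DifferentiableAt ℝ (deriv (fun x : ℝ => ∫ z, η z * |x + ε * z|)) x) ∧
    ∀ x : ℝ,
      deriv (deriv (fun x : ℝ => ∫ z, η z * |x + ε * z|)) x =
        (2 / ε) * η (-x / ε) := by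
  have hF (x : ℝ) := hasDerivAt_integral_mul_abs_add_mul η.integrable η.integrable_id_mul hε
    η.continuous.continuousAt (x := x)
  have hF' (x : ℝ) := hasDerivAt_const_sub_two_mul_setIntegral_Iic (∫ z, η z) η.integrable
    η.continuous.continuousAt (ε := ε) (x := x)
  have hderiv : deriv (fun x : ℝ => ∫ z, η z * |x + ε * z|)
      = fun x => (∫ z, η z) - 2 * ∫ z in Iic (-x / ε), η z :=
    funext fun x => (hF x).deriv
  refine ⟨fun x => ⟨(hF x).differentiableAt, ?_⟩, fun x => ?_⟩
  · rw [hderiv]; exact (hF' x).differentiableAt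
  · rw [hderiv]; exact (hF' x).deriv
end

section
/- Let η : ℝ → ℝ be a Schwartz function with ∫ η(z) dz = 1, and for ε > 0 define H_ε(x) := ∫ η(z) H(x + εz) dz where H is the Heaviside step function (H(y) = 1 for y > 0 and H(y) = 0 for y ≤ 0). Then for every continuous compactly supported T : ℝ → ℝ, lim_{ε → 0⁺} ∫ (H_ε(x)² − H_ε(x)) T(x) dx = 0; that is, the square of the embedded Heaviside function is associated to the Heaviside function. -/
/-!
Write `f_ε(x) = ∫ η(z) f(x + εz) dz`. Where `f` is bounded and continuous at `x`, dominated
convergence in `z` gives `f_ε(x) → (∫ η) f(x)`, and the bound `|f_ε| ≤ sup |f| · ∫ |η|` holds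
uniformly in `ε`. The Heaviside function is continuous off the null set `{0}`, so
`H_ε² − H_ε → H² − H = 0` almost everywhere with a uniform bound, and a second dominated
convergence, now in `x` against the integrable test function `T`, gives the claim.
-/

open MeasureTheory Filter Topology Set

noncomputable section

def mollify (η f : ℝ → ℝ) (ε x : ℝ) : ℝ :=
  ∫ z, η z * f (x + ε * z)

theorem norm_mollify_le {η f : ℝ → ℝ} {C : ℝ} (hη : Integrable η) (hf : ∀ y, ‖f y‖ ≤ C)
    (ε x : ℝ) : ‖mollify η f ε x‖ ≤ C * ∫ z, ‖η z‖ := by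
  rw [← integral_const_mul]
  refine norm_integral_le_of_norm_le (hη.norm.const_mul C) (Eventually.of_forall fun z => ?_)
  rw [norm_mul, mul_comm]
  exact mul_le_mul_of_nonneg_right (hf _) (norm_nonneg _)

theorem aestronglyMeasurable_mollify {η f : ℝ → ℝ} (hη : Measurable η) (hf : Measurable f)
    (ε : ℝ) : AEStronglyMeasurable (mollify η f ε) := by
  have hjoint : StronglyMeasurable fun p : ℝ × ℝ => η p.2 * f (p.1 + ε * p.2) :=
    ((hη.comp measurable_snd).mul
      (hf.comp (measurable_fst.add (measurable_const.mul measurable_snd)))).stronglyMeasurable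
  exact hjoint.integral_prod_right'.aestronglyMeasurable

theorem tendsto_mollify_of_continuousAt {η f : ℝ → ℝ} {C x : ℝ} (hη : Integrable η)
    (hfm : Measurable f) (hf : ∀ y, ‖f y‖ ≤ C) (hfx : ContinuousAt f x) :
    Tendsto (fun ε => mollify η f ε x) (𝓝 0) (𝓝 ((∫ z, η z) * f x)) := by
  rw [← integral_mul_const]
  refine tendsto_integral_filter_of_dominated_convergence (fun z => ‖η z‖ * C)
    (Eventually.of_forall fun ε => ?_) (Eventually.of_forall fun ε => ?_) (hη.norm.mul_const C)
    (Eventually.of_forall fun z => ?_)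
  · have hfε : Measurable fun z => f (x + ε * z) := by fun_prop
    exact hη.aestronglyMeasurable.mul hfε.aestronglyMeasurable
  · exact Eventually.of_forall fun z => by
      rw [norm_mul]
      exact mul_le_mul_of_nonneg_left (hf _) (norm_nonneg _)
  · have hshift : Tendsto (fun ε : ℝ => x + ε * z) (𝓝 0) (𝓝 x) := by
      simpa using ((tendsto_id (x := 𝓝 (0 : ℝ))).mul_const z).const_add x
    exact (hfx.tendsto.comp hshift).const_mul (η z)

theorem tendsto_integral_mul_of_bounded {α ι : Type*} [MeasurableSpace α] {μ : Measure α}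
    {l : Filter ι} [l.IsCountablyGenerated] {F : ι → α → ℝ} {g T : α → ℝ} {C : ℝ}
    (hFm : ∀ i, AEStronglyMeasurable (F i) μ) (hF : ∀ i x, ‖F i x‖ ≤ C) (hT : Integrable T μ)
    (hlim : ∀ᵐ x ∂μ, Tendsto (fun i => F i x) l (𝓝 (g x))) :
    Tendsto (fun i => ∫ x, F i x * T x ∂μ) l (𝓝 (∫ x, g x * T x ∂μ)) := by
  refine tendsto_integral_filter_of_dominated_convergence (fun x => C * ‖T x‖)
    (Eventually.of_forall fun i => (hFm i).mul hT.aestronglyMeasurable)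
    (Eventually.of_forall fun i => Eventually.of_forall fun x => ?_) (hT.norm.const_mul C)
    (hlim.mono fun x hx => hx.mul_const (T x))
  rw [norm_mul]
  exact mul_le_mul_of_nonneg_right (hF i x) (norm_nonneg _)

theorem tendsto_integral_mollify_sq_sub_mollify {η f T : ℝ → ℝ} {C : ℝ} (hη : Integrable η)
    (hηm : Measurable η) (hη1 : ∫ z, η z = 1) (hfm : Measurable f) (hf : ∀ y, ‖f y‖ ≤ C)
    (hf_sq : ∀ y, f y ^ 2 = f y) (hf_cont : ∀ᵐ x, ContinuousAt f x) (hT : Integrable T) :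
    Tendsto (fun ε => ∫ x, (mollify η f ε x ^ 2 - mollify η f ε x) * T x) (𝓝 0) (𝓝 0) := by
  set M := C * ∫ z, ‖η z‖
  have hM : ∀ ε x, ‖mollify η f ε x‖ ≤ M := norm_mollify_le hη hf
  have hbound : ∀ ε x, ‖mollify η f ε x ^ 2 - mollify η f ε x‖ ≤ M ^ 2 + M := fun ε x =>
    calc ‖mollify η f ε x ^ 2 - mollify η f ε x‖
        ≤ ‖mollify η f ε x‖ ^ 2 + ‖mollify η f ε x‖ := by
          rw [← norm_pow]; exact norm_sub_le _ _
      _ ≤ M ^ 2 + M := by gcongr <;> exact hM ε x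
  have hlim : ∀ᵐ x, Tendsto (fun ε => mollify η f ε x ^ 2 - mollify η f ε x) (𝓝 0) (𝓝 0) := by
    filter_upwards [hf_cont] with x hx
    have h := tendsto_mollify_of_continuousAt hη hfm hf hx
    rw [hη1, one_mul] at h
    simpa only [hf_sq, sub_self] using (h.pow 2).sub h
  have hmeas : ∀ ε, AEStronglyMeasurable (fun x => mollify η f ε x ^ 2 - mollify η f ε x) :=
    fun ε => (aestronglyMeasurable_mollify hηm hfm ε).pow 2 |>.sub
      (aestronglyMeasurable_mollify hηm hfm ε)
  simpa using tendsto_integral_mul_of_bounded (g := fun _ => 0) hmeas hbound hT hlim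

def heaviside (y : ℝ) : ℝ := if 0 < y then 1 else 0

theorem measurable_heaviside : Measurable heaviside :=
  Measurable.ite measurableSet_Ioi measurable_const measurable_const

theorem norm_heaviside_le_one (y : ℝ) : ‖heaviside y‖ ≤ 1 := by
  unfold heaviside; split_ifs <;> norm_num

theorem heaviside_sq (y : ℝ) : heaviside y ^ 2 = heaviside y := by
  unfold heaviside; split_ifs <;> norm_num

theorem continuousAt_heaviside {x : ℝ} (hx : x ≠ 0) : ContinuousAt heaviside x := by
  rcases hx.lt_or_gt with hneg | hpos
  · exact continuousAt_const.congr <| eventually_of_mem (Iio_mem_nhds hneg) fun y hy =>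
      (if_neg (not_lt.2 (le_of_lt hy))).symm
  · exact continuousAt_const.congr <| eventually_of_mem (Ioi_mem_nhds hpos) fun y hy =>
      (if_pos hy).symm

end

/-- Let `H` be the Heaviside function and `H_ε(x) = ∫ η(z) H(x + εz) dz` its
mollified embedding with respect to a Schwartz mollifier `η` with `∫ η = 1`.
Then `H_ε² − H_ε` is associated to zero: for every continuous compactly
supported `T`, `∫ (H_ε(x)² − H_ε(x)) T(x) dx → 0` as `ε → 0⁺`. -/
theorem heaviside_squared_associated (η : SchwartzMap ℝ ℝ)
    (hη : ∫ z, η z = 1)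
    (H : ℝ → ℝ) (hH : ∀ y : ℝ, H y = if 0 < y then 1 else 0)
    (T : ℝ → ℝ) (hT : Continuous T) (hTc : HasCompactSupport T) :
    Tendsto
      (fun ε : ℝ => ∫ x,
        ((∫ z, η z * H (x + ε * z)) ^ 2 - ∫ z, η z * H (x + ε * z)) * T x)
      (nhdsWithin 0 (Set.Ioi 0)) (nhds 0) := by
  obtain rfl : H = heaviside := funext hH
  have hH_cont : ∀ᵐ x : ℝ, ContinuousAt heaviside x :=
    (measure_eq_zero_iff_ae_notMem.1 (measure_singleton 0)).mono fun _ hx =>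
      continuousAt_heaviside hx
  exact (tendsto_integral_mollify_sq_sub_mollify η.integrable η.continuous.measurable hη
    measurable_heaviside norm_heaviside_le_one heaviside_sq hH_cont
    (hT.integrable_of_hasCompactSupport hTc)).mono_left nhdsWithin_le_nhds
end

section
/- Let η : ℝ → ℝ be a Schwartz function with ∫ η(z) dz = 1, and for ε > 0 define H_ε(x) := ∫ η(z) H(x + εz) dz where H is the Heaviside step function. Then for every ε > 0, ∫ (H_ε(x)² − H_ε(x)) · H_ε'(x) dx = 1/3 − 1/2 = −1/6. Hence the infinitesimal difference H_ε² − H_ε gives a nonzero finite result when multiplied by the unbounded family H_ε' = δ_ε and integrated, independently of ε and of the mollifier η. -/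
/-!
`H_ε(x)` is the tail integral `∫_{-x/ε}^∞ η`, a `C¹` function rising from `0` at `-∞` to `∫ η = 1`
at `+∞`, whose derivative `δ_ε` is integrable. The substitution `y = H_ε(x)` on the whole line
turns `∫ (H_ε² - H_ε) H_ε'` into `∫₀¹ (y² - y) dy = 1/3 - 1/2`, whatever `ε` and `η` are.
-/

open MeasureTheory Filter Set Topology

theorem norm_sub_le_integral_norm_of_hasDerivAt {F F' : ℝ → ℝ}
    (hF : ∀ x, HasDerivAt F (F' x) x) (hF' : Integrable F') (x y : ℝ) :
    ‖F y - F x‖ ≤ ∫ t, ‖F' t‖ := by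
  rw [← intervalIntegral.integral_eq_sub_of_hasDerivAt (fun t _ => hF t) hF'.intervalIntegrable]
  exact intervalIntegral.norm_integral_le_integral_norm_uIoc.trans
    (setIntegral_le_integral hF'.norm (.of_forall fun _ => norm_nonneg _))

theorem integrable_comp_mul_deriv {F F' g : ℝ → ℝ}
    (hF : ∀ x, HasDerivAt F (F' x) x) (hF' : Integrable F') (hg : Continuous g) :
    Integrable fun x => g (F x) * F' x := by
  obtain ⟨C, hC⟩ := (isCompact_closedBall (F 0) (∫ t, ‖F' t‖)).exists_bound_of_continuousOn
    hg.continuousOn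
  have hF_cont : Continuous F := continuous_iff_continuousAt.2 fun x => (hF x).continuousAt
  refine hF'.bdd_mul (hg.comp hF_cont).aestronglyMeasurable (.of_forall fun x => hC _ ?_)
  rw [Metric.mem_closedBall, dist_eq_norm]
  exact norm_sub_le_integral_norm_of_hasDerivAt hF hF' 0 x

theorem integral_comp_mul_deriv_of_tendsto {F F' g : ℝ → ℝ} {a b : ℝ}
    (hF : ∀ x, HasDerivAt F (F' x) x) (hF' : Integrable F') (hg : Continuous g)
    (hbot : Tendsto F atBot (𝓝 a)) (htop : Tendsto F atTop (𝓝 b)) :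
    ∫ x, g (F x) * F' x = ∫ y in a..b, g y := by
  set G : ℝ → ℝ := fun y => ∫ t in a..y, g t
  have hG : Continuous G := intervalIntegral.continuous_primitive hg.intervalIntegrable a
  have hGF := integral_of_hasDerivAt_of_tendsto
    (fun x => (hg.integral_hasStrictDerivAt a (F x)).hasDerivAt.comp x (hF x))
    (integrable_comp_mul_deriv hF hF' hg) ((hG.tendsto a).comp hbot) ((hG.tendsto b).comp htop)
  simpa [G] using hGF

section TailIntegral

variable {E : Type*} [NormedAddCommGroup E] [NormedSpace ℝ E] {f : ℝ → E}

theorem integral_Ioi_eq_intervalIntegral_add (hf : Integrable f) :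
    (fun t => ∫ z in Ioi t, f z) = fun t => (∫ z in t..0, f z) + ∫ z in Ioi 0, f z :=
  funext fun _ => (intervalIntegral.integral_interval_add_Ioi hf.integrableOn hf.integrableOn).symm

theorem hasDerivAt_integral_Ioi [CompleteSpace E] (hf : Integrable f) (hc : Continuous f)
    (t : ℝ) : HasDerivAt (fun s => ∫ z in Ioi s, f z) (-f t) t := by
  rw [integral_Ioi_eq_intervalIntegral_add hf]
  exact (intervalIntegral.integral_hasDerivAt_left hf.intervalIntegrable
    hc.aestronglyMeasurable.stronglyMeasurableAtFilter hc.continuousAt).add_const _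

theorem tendsto_integral_Ioi_atTop (hf : Integrable f) :
    Tendsto (fun t => ∫ z in Ioi t, f z) atTop (𝓝 0) := by
  rw [integral_Ioi_eq_intervalIntegral_add hf]
  have h := (intervalIntegral_tendsto_integral_Ioi 0 hf.integrableOn tendsto_id).neg.add_const
    (∫ z in Ioi 0, f z)
  simpa [intervalIntegral.integral_symm 0] using h

theorem tendsto_integral_Ioi_atBot (hf : Integrable f) :
    Tendsto (fun t => ∫ z in Ioi t, f z) atBot (𝓝 (∫ z, f z)) := by
  rw [integral_Ioi_eq_intervalIntegral_add hf,
    ← intervalIntegral.integral_Iic_add_Ioi hf.integrableOn hf.integrableOn]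
  exact (intervalIntegral_tendsto_integral_Iic 0 hf.integrableOn tendsto_id).add_const _

end TailIntegral

theorem integral_mul_heaviside_eq_integral_Ioi (η : ℝ → ℝ) {ε : ℝ} (hε : 0 < ε) (x : ℝ) :
    ∫ z, η z * (if 0 < x + ε * z then 1 else 0) = ∫ z in Ioi (-x / ε), η z := by
  rw [← integral_indicator measurableSet_Ioi]
  congr 1 with z
  have hz : -x / ε < z ↔ 0 < x + ε * z := by
    rw [div_lt_iff₀ hε]
    constructor <;> intro <;> linarith
  simp [indicator, hz]

/-- For the embedded Heaviside function `H_ε(x) = ∫ η(z) H(x + εz) dz`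
(with `η` a Schwartz mollifier, `∫ η = 1`), one has for every `ε > 0`
`∫ (H_ε² − H_ε) · H_ε' dx = 1/3 − 1/2 = −1/6`, independently of `ε` and `η`. -/
theorem heaviside_squared_minus_heaviside_times_delta (η : SchwartzMap ℝ ℝ)
    (hη : ∫ z, η z = 1)
    (H : ℝ → ℝ) (hH : ∀ y : ℝ, H y = if 0 < y then 1 else 0)
    (ε : ℝ) (hε : 0 < ε) :
    ∫ x : ℝ,
      ((∫ z, η z * H (x + ε * z)) ^ 2 - ∫ z, η z * H (x + ε * z)) *
        deriv (fun x : ℝ => ∫ z, η z * H (x + ε * z)) x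
      = 1 / 3 - 1 / 2 := by
  obtain rfl : H = fun y => if 0 < y then 1 else 0 := funext hH
  simp_rw [integral_mul_heaviside_eq_integral_Ioi η hε]
  set F := fun x => ∫ z in Ioi (-x / ε), η z
  have hF : ∀ x, HasDerivAt F (η (-x / ε) / ε) x := fun x => by
    have h := (hasDerivAt_integral_Ioi η.integrable η.continuous (-x / ε)).comp x
      ((hasDerivAt_neg x).div_const ε)
    exact h.congr_deriv (by ring)
  have hF' : Integrable fun x => η (-x / ε) / ε := by
    simpa only [neg_div, ← div_neg] using (η.integrable.comp_div (neg_ne_zero.2 hε.ne')).div_const ε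
  have hbot : Tendsto F atBot (𝓝 0) :=
    (tendsto_integral_Ioi_atTop η.integrable).comp (tendsto_neg_atBot_atTop.atTop_div_const hε)
  have htop : Tendsto F atTop (𝓝 1) :=
    hη ▸ (tendsto_integral_Ioi_atBot η.integrable).comp (tendsto_neg_atTop_atBot.atBot_div_const hε)
  simp_rw [(hF _).deriv]
  rw [integral_comp_mul_deriv_of_tendsto (g := fun y => y ^ 2 - y) hF hF' (by fun_prop) hbot htop]
  norm_num [integral_pow]
end

section
/- Let η : ℝ → ℝ be a Schwartz function with ∫ η(z) dz = 1, let H_ε(x) := ∫ η(z) H(x + εz) dz be the embedded Heaviside function and δ_ε(x) := (1/ε) η(−x/ε) the embedded Dirac delta (so that H_ε' = δ_ε). Then for every smooth compactly supported T : ℝ → ℝ, lim_{ε → 0⁺} ∫ 2 H_ε(x) δ_ε(x) T(x) dx = T(0); that is, 2 H δ is associated to δ. -/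
open MeasureTheory Filter

/-- With `H_ε` the embedded Heaviside function and `δ_ε(x) = (1/ε) η(−x/ε)` the
embedded Dirac delta, for every smooth compactly supported `T`,
`∫ 2 H_ε δ_ε T → T 0` as `ε → 0⁺`; that is, `2 H δ` is associated to `δ`. -/
theorem two_heaviside_delta_associated_delta (η : SchwartzMap ℝ ℝ)
    (hη : ∫ z, η z = 1)
    (H : ℝ → ℝ) (hH : ∀ y : ℝ, H y = if 0 < y then 1 else 0)
    (T : ℝ → ℝ) (hT : ContDiff ℝ (⊤ : ℕ∞) T) (hTc : HasCompactSupport T) :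
    Tendsto
      (fun ε : ℝ => ∫ x,
        2 * (∫ z, η z * H (x + ε * z)) * ((1 / ε) * η (-x / ε)) * T x)
      (nhdsWithin 0 (Set.Ioi 0)) (nhds (T 0)) := by
  have hηi : Integrable (fun z => η z) := η.integrable
  set G : ℝ → ℝ := fun y => ∫ z in Set.Ioi (-y), η z with hGdef
  -- the inner integral equals `G (x / ε)` for `ε > 0`
  have hGeq : ∀ ε : ℝ, 0 < ε → ∀ x : ℝ,
      (∫ z, η z * H (x + ε * z)) = G (x / ε) := by
    intro ε hε x
    show (∫ z, η z * H (x + ε * z)) = ∫ z in Set.Ioi (-(x / ε)), (η : ℝ → ℝ) z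
    rw [← integral_indicator measurableSet_Ioi]
    congr 1
    funext z
    rw [hH]
    have hiff : 0 < x + ε * z ↔ -(x / ε) < z := by
      constructor
      · intro h
        have := (div_lt_div_iff_of_pos_right hε).mpr (show -x < ε * z by linarith)
        rw [mul_comm ε z, mul_div_assoc, div_self hε.ne', mul_one, neg_div] at this
        exact this
      · intro h
        have : -x / ε < z := by rwa [neg_div]
        have := (mul_lt_mul_iff_right₀ hε).mpr this
        rw [mul_div_assoc'] at this
        rw [mul_comm ε (-x), mul_div_assoc, div_self hε.ne', mul_one] at this
        linarith
    by_cases h : -(x / ε) < z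
    · rw [if_pos (hiff.mpr h), Set.indicator_of_mem (Set.mem_Ioi.mpr h), mul_one]
    · rw [if_neg (fun hc => h (hiff.mp hc)), Set.indicator_of_notMem (by simpa using h),
        mul_zero]
  -- derivative of the cumulative function
  have hΦderiv : ∀ t : ℝ, HasDerivAt (fun t => ∫ z in Set.Iic t, η z) (η t) t := by
    intro t
    have heq : (fun t => ∫ z in Set.Iic t, η z)
        = fun t => (∫ z in Set.Iic (0:ℝ), η z) + ∫ z in (0:ℝ)..t, η z := by
      funext t
      have h := intervalIntegral.integral_Iic_sub_Iic (a := (0:ℝ)) (b := t)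
        hηi.integrableOn hηi.integrableOn
      linarith
    rw [heq]
    exact (intervalIntegral.integral_hasDerivAt_right
      hηi.intervalIntegrable
      hηi.aestronglyMeasurable.stronglyMeasurableAtFilter
      η.continuous.continuousAt).const_add _
  have hGsplit : ∀ y : ℝ, G y = (∫ z, η z) - ∫ z in Set.Iic (-y), η z := by
    intro y
    have := integral_add_compl (measurableSet_Iic (a := -y)) hηi
    rw [Set.compl_Iic] at this
    rw [hGdef]
    linarith [this]
  have hGderiv : ∀ y : ℝ, HasDerivAt G (η (-y)) y := by
    intro y
    have h1 : HasDerivAt (fun y : ℝ => ∫ z in Set.Iic (-y), η z) (η (-y) * (-1)) y :=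
      HasDerivAt.comp y (hΦderiv (-y)) (hasDerivAt_neg y)
    have h2 := h1.const_sub (∫ z, η z)
    have heq : (fun y : ℝ => (∫ z, η z) - ∫ z in Set.Iic (-y), η z) = G := by
      funext y; rw [hGsplit y]
    rw [heq] at h2
    exact h2.congr_deriv (by ring)
  have hGcont : Continuous G :=
    continuous_iff_continuousAt.mpr fun y => (hGderiv y).continuousAt
  -- bound on G
  set M : ℝ := ∫ z, ‖η z‖ with hMdef
  have hGbd : ∀ y : ℝ, ‖G y‖ ≤ M := by
    intro y
    calc ‖G y‖ ≤ ∫ z in Set.Ioi (-y), ‖η z‖ := norm_integral_le_integral_norm _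
    _ ≤ M := setIntegral_le_integral hηi.norm (ae_of_all _ fun z => norm_nonneg _)
  -- limits of G at ±∞
  have hGtop : Tendsto G atTop (nhds 1) := by
    have h := (MeasureTheory.aecover_Ioi (μ := volume) (l := atTop)
      (a := fun y : ℝ => -y) tendsto_neg_atTop_atBot).integral_tendsto_of_countably_generated hηi
    rwa [hη] at h
  have hΦtop : Tendsto (fun y : ℝ => ∫ z in Set.Iic (-y), η z) atBot (nhds 1) := by
    have h := (MeasureTheory.aecover_Iic (μ := volume) (l := atBot)
      (b := fun y : ℝ => -y) tendsto_neg_atBot_atTop).integral_tendsto_of_countably_generated hηi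
    rwa [hη] at h
  have hGbot : Tendsto G atBot (nhds 0) := by
    have h := (tendsto_const_nhds (x := ∫ z, η z) (f := atBot)).sub hΦtop
    have heq : (fun y : ℝ => (∫ z, η z) - ∫ z in Set.Iic (-y), η z) = G := by
      funext y; rw [hGsplit y]
    rw [heq, hη, sub_self] at h
    exact h
  -- integrability of 2 G η(-·)
  have hηneg : Integrable (fun y : ℝ => η (-y)) := hηi.comp_neg
  have hf'int : Integrable (fun y : ℝ => 2 * G y * η (-y)) := by
    apply hηneg.bdd_mul (c := 2 * M)
    · exact (continuous_const.mul hGcont).aestronglyMeasurable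
    · refine ae_of_all _ fun y => ?_
      rw [norm_mul, Real.norm_two]
      exact mul_le_mul_of_nonneg_left (hGbd y) (by norm_num)
  -- the key integral: ∫ 2 G η(-·) = 1
  have hkey : (∫ y, 2 * G y * η (-y)) = 1 := by
    have hψderiv : ∀ y : ℝ, HasDerivAt (fun y => G y * G y) (2 * G y * η (-y)) y := by
      intro y
      exact ((hGderiv y).mul (hGderiv y)).congr_deriv (by ring)
    have := integral_of_hasDerivAt_of_tendsto hψderiv hf'int
      (by simpa using hGbot.mul hGbot) (by simpa using hGtop.mul hGtop)
    rw [this]; norm_num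
  -- bound for dominated convergence
  obtain ⟨C, hC⟩ := hT.continuous.bounded_above_of_compact_support hTc
  have hC0 : 0 ≤ C := le_trans (norm_nonneg _) (hC 0)
  have hM0 : 0 ≤ M := integral_nonneg fun z => norm_nonneg _
  -- dominated convergence
  have hDCT : Tendsto (fun ε : ℝ => ∫ y, 2 * G y * η (-y) * T (ε * y))
      (nhdsWithin 0 (Set.Ioi 0)) (nhds (T 0)) := by
    have hlim : Tendsto (fun ε : ℝ => ∫ y, 2 * G y * η (-y) * T (ε * y))
        (nhdsWithin 0 (Set.Ioi 0)) (nhds (∫ y, 2 * G y * η (-y) * T 0)) := by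
      apply tendsto_integral_filter_of_dominated_convergence
        (bound := fun y => 2 * M * C * ‖η (-y)‖)
      · filter_upwards with ε
        exact (((continuous_const.mul hGcont).mul
          (η.continuous.comp continuous_neg)).mul
          (hT.continuous.comp (continuous_const.mul continuous_id))).aestronglyMeasurable
      · filter_upwards with ε
        filter_upwards with y
        rw [norm_mul, norm_mul, norm_mul, Real.norm_two]
        have h1 : 2 * ‖G y‖ * ‖η (-y)‖ ≤ 2 * M * ‖η (-y)‖ :=
          mul_le_mul_of_nonneg_right
            (mul_le_mul_of_nonneg_left (hGbd y) (by norm_num)) (norm_nonneg _)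
        have h2 : 2 * ‖G y‖ * ‖η (-y)‖ * ‖T (ε * y)‖ ≤ 2 * M * ‖η (-y)‖ * C :=
          mul_le_mul h1 (hC _) (norm_nonneg _) (by positivity)
        linarith [h2]
      · exact ((hηneg.norm).const_mul _)
      · filter_upwards with y
        have h1 : Tendsto (fun ε : ℝ => ε * y) (nhdsWithin 0 (Set.Ioi 0)) (nhds 0) := by
          have := ((continuous_id.mul (continuous_const (y := y))).tendsto 0).mono_left
            (nhdsWithin_le_nhds (s := Set.Ioi (0:ℝ)))
          simpa [Pi.mul_def] using this
        exact Tendsto.const_mul _ ((hT.continuous.tendsto 0).comp h1)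
    have : (∫ y, 2 * G y * η (-y) * T 0) = T 0 := by
      rw [integral_mul_const, hkey, one_mul]
    rwa [this] at hlim
  -- conclude by eventual equality on Ioi 0
  refine Tendsto.congr' ?_ hDCT
  filter_upwards [self_mem_nhdsWithin] with ε hε
  have hε' : (0:ℝ) < ε := hε
  have hstep : (fun x => 2 * (∫ z, η z * H (x + ε * z)) * ((1 / ε) * η (-x / ε)) * T x)
      = fun x => (1 / ε) * (2 * G (x / ε) * η (-(x / ε)) * T (ε * (x / ε))) := by
    funext x
    rw [hGeq ε hε' x, mul_comm ε (x / ε), div_mul_cancel₀ _ hε'.ne', neg_div]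
    ring
  rw [hstep, integral_const_mul, Measure.integral_comp_div
    (fun y => 2 * G y * η (-y) * T (ε * y)) ε, smul_eq_mul, abs_of_pos hε',
    ← mul_assoc, one_div, inv_mul_cancel₀ hε'.ne', one_mul]
end

section
/- Let n ≥ 1, let η : ℝ → ℝ be a Schwartz function, and let δ_ε(x) := (1/ε) η(−x/ε) be the embedded Dirac delta. Then for every continuous compactly supported T : ℝ → ℝ, lim_{ε → 0⁺} ε^{n−1} ∫ δ_ε(x)ⁿ T(x) dx = T(0) · ∫ η(z)ⁿ dz. In particular, for n ≥ 2 and T(0) ∫ ηⁿ ≠ 0, the n-th power of the embedded delta function has no associated distribution, but it is a moderate family of order O(ε^{−n}). -/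
/-!
The substitution `x = -ε u` turns `ε^{n-1} ∫ δ_εⁿ T` into `∫ η(u)ⁿ T(-ε u) du`, and since `ηⁿ` is
integrable and `T` is bounded and continuous, dominated convergence sends this to `T 0 ∫ ηⁿ`.
For `n ≥ 2` the factor `ε^{n-1}` tends to `0`, so `∫ δ_εⁿ T` cannot converge when the limit is
nonzero. The moderate bound is `|δ_ε| ≤ sup |η| / ε`.
-/

open MeasureTheory Filter Topology

theorem SchwartzMap.integrable_pow {E : Type*} [NormedAddCommGroup E] [NormedSpace ℝ E]
    [MeasurableSpace E] [BorelSpace E] {μ : Measure E} [μ.HasTemperateGrowth]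
    (η : SchwartzMap E ℝ) {n : ℕ} (hn : n ≠ 0) : Integrable (fun x => η x ^ n) μ := by
  refine (integrable_norm_iff (f := fun x => η x ^ n)
    (η.continuous.pow n).aestronglyMeasurable).1 ?_
  simpa only [norm_pow] using (η.memLp n μ).integrable_norm_pow hn

theorem integral_comp_neg_div_of_pos {E : Type*} [NormedAddCommGroup E] [NormedSpace ℝ E]
    (g : ℝ → E) {ε : ℝ} (hε : 0 < ε) : ∫ x, g (-x / ε) = ε • ∫ u, g u := by
  rw [← integral_neg_eq_self]
  simp only [neg_neg]
  rw [Measure.integral_comp_div, abs_of_pos hε]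

theorem pow_sub_one_mul_integral_delta_pow (f T : ℝ → ℝ) {n : ℕ} (hn : 1 ≤ n) {ε : ℝ}
    (hε : 0 < ε) :
    ε ^ (n - 1) * ∫ x, ((1 / ε) * f (-x / ε)) ^ n * T x = ∫ u, f u ^ n * T (-(ε * u)) := by
  have hintegrand : (fun x => ((1 / ε) * f (-x / ε)) ^ n * T x)
      = fun x => (1 / ε) ^ n * (fun u => f u ^ n * T (-(ε * u))) (-x / ε) := by
    funext x
    have hx : -(ε * (-x / ε)) = x := by field_simp
    simp only [hx, mul_pow]
    ring
  rw [hintegrand, integral_const_mul, integral_comp_neg_div_of_pos (fun u => f u ^ n * T (-(ε * u))) hε, smul_eq_mul,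
    ← mul_assoc, ← mul_assoc]
  have hscale : ε ^ (n - 1) * (1 / ε) ^ n * ε = 1 := by
    obtain ⟨m, rfl⟩ : ∃ m, n = m + 1 := ⟨n - 1, by omega⟩
    rw [add_tsub_cancel_right, mul_right_comm, ← pow_succ, ← mul_pow, mul_one_div_cancel hε.ne',
      one_pow]
  rw [hscale, one_mul]

theorem tendsto_integral_mul_comp_mul {g T : ℝ → ℝ} (hg : Integrable g) (hT : Continuous T)
    {C : ℝ} (hC : ∀ x, ‖T x‖ ≤ C) :
    Tendsto (fun ε => ∫ u, g u * T (ε * u)) (𝓝 0) (𝓝 ((∫ u, g u) * T 0)) := by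
  rw [← integral_mul_const]
  refine tendsto_integral_filter_of_dominated_convergence (fun u => ‖g u‖ * C)
    (Eventually.of_forall fun ε => ?_) (Eventually.of_forall fun ε => ?_) (hg.norm.mul_const C)
    (ae_of_all _ fun u => ?_)
  · exact hg.aestronglyMeasurable.mul (hT.comp (continuous_const_mul ε)).aestronglyMeasurable
  · exact ae_of_all _ fun u => by rw [norm_mul]; gcongr; exact hC _
  · have hlim : Tendsto (fun ε : ℝ => ε * u) (𝓝 0) (𝓝 0) := by
      simpa using (continuous_mul_const u).tendsto 0
    exact ((hT.tendsto 0).comp hlim).const_mul _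

theorem tendsto_pow_sub_one_mul_integral_delta_pow {n : ℕ} (hn : 1 ≤ n) (η : SchwartzMap ℝ ℝ)
    {T : ℝ → ℝ} (hT : Continuous T) (hTs : HasCompactSupport T) :
    Tendsto (fun ε : ℝ => ε ^ (n - 1) * ∫ x, ((1 / ε) * η (-x / ε)) ^ n * T x)
      (𝓝[>] 0) (𝓝 (T 0 * ∫ z, η z ^ n)) := by
  obtain ⟨C, hC⟩ := hT.bounded_above_of_compact_support hTs
  have hlim := tendsto_integral_mul_comp_mul (η.integrable_pow (by omega : n ≠ 0))
    (hT.comp continuous_neg) (fun x => hC (-x))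
  simp only [Function.comp_apply, neg_zero] at hlim
  rw [mul_comm]
  refine (hlim.mono_left nhdsWithin_le_nhds).congr' ?_
  filter_upwards [self_mem_nhdsWithin] with ε hε
  exact (pow_sub_one_mul_integral_delta_pow η T hn hε).symm

theorem not_exists_tendsto_of_tendsto_zero_mul {α : Type*} {l : Filter α} [l.NeBot]
    {f g : α → ℝ} {a : ℝ} (hf : Tendsto f l (𝓝 0)) (hfg : Tendsto (fun x => f x * g x) l (𝓝 a))
    (ha : a ≠ 0) : ¬ ∃ L, Tendsto g l (𝓝 L) := by
  rintro ⟨L, hL⟩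
  exact ha (tendsto_nhds_unique hfg (by simpa using hf.mul hL))

theorem abs_delta_pow_le {f : ℝ → ℝ} {M : ℝ} (hM : ∀ x, |f x| ≤ M) (n : ℕ) {ε : ℝ} (hε : 0 < ε)
    (x : ℝ) : |((1 / ε) * f (-x / ε)) ^ n| ≤ M ^ n / ε ^ n := by
  rw [abs_pow, ← div_pow, abs_mul, abs_of_pos (one_div_pos.2 hε), one_div_mul_eq_div]
  gcongr
  exact hM _

/-- For `n ≥ 1` and `δ_ε(x) = (1/ε) η(−x/ε)` the embedded Dirac delta of a
Schwartz function `η`: for every continuous compactly supported `T`,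
`ε^{n−1} ∫ δ_εⁿ T → T 0 · ∫ ηⁿ` as `ε → 0⁺`; in particular for `n ≥ 2` with
`T 0 · ∫ ηⁿ ≠ 0` the family `∫ δ_εⁿ T` has no finite limit (no associated
distribution); and `δ_εⁿ` is moderate: `|δ_ε(x)ⁿ| ≤ C / εⁿ` on `(0,1)`. -/
theorem delta_pow_scaled_limit (n : ℕ) (hn : 1 ≤ n) (η : SchwartzMap ℝ ℝ) :
    (∀ T : ℝ → ℝ, Continuous T → HasCompactSupport T →
      Tendsto (fun ε : ℝ => ε ^ (n - 1) * ∫ x, ((1 / ε) * η (-x / ε)) ^ n * T x)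
        (nhdsWithin 0 (Set.Ioi 0)) (nhds (T 0 * ∫ z, (η z) ^ n)) ∧
      (2 ≤ n → T 0 * (∫ z, (η z) ^ n) ≠ 0 →
        ¬ ∃ L : ℝ, Tendsto (fun ε : ℝ => ∫ x, ((1 / ε) * η (-x / ε)) ^ n * T x)
            (nhdsWithin 0 (Set.Ioi 0)) (nhds L))) ∧
    ∃ C : ℝ, ∀ ε ∈ Set.Ioo (0 : ℝ) 1, ∀ x : ℝ,
      |((1 / ε) * η (-x / ε)) ^ n| ≤ C / ε ^ n := by
  refine ⟨fun T hT hTs => ⟨tendsto_pow_sub_one_mul_integral_delta_pow hn η hT hTs,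
    fun hn2 hne => ?_⟩, ?_⟩
  · have hpow : Tendsto (fun ε : ℝ => ε ^ (n - 1)) (𝓝[>] 0) (𝓝 0) :=
      ((continuous_pow (n - 1)).tendsto' 0 0 (zero_pow (by omega))).mono_left
        nhdsWithin_le_nhds
    exact not_exists_tendsto_of_tendsto_zero_mul hpow
      (tendsto_pow_sub_one_mul_integral_delta_pow hn η hT hTs) hne
  · exact ⟨_, fun ε hε => abs_delta_pow_le (η.norm_le_seminorm ℝ) n hε.1⟩
end

section
/- Let η : ℝ → ℝ be a Schwartz function with ∫ η(z) dz = 1 and ∫ zⁿ η(z) dz = 0 for all n ≥ 1, let f : ℝ → ℝ be a smooth function all of whose derivatives are bounded, let g : ℝ → ℝ be continuous and compactly supported, and let n ∈ ℕ. Define f_ε(x) := ∫ η(z) f(x + εz) dz and γ_ε(x) := (−1/ε)ⁿ ∫ (Dⁿη)(z) g(x + εz) dz (the mollified embedding of the n-th distributional derivative γ = Dⁿg). Then for every smooth compactly supported T : ℝ → ℝ, lim_{ε → 0⁺} ∫ f_ε(x) γ_ε(x) T(x) dx = (−1)ⁿ ∫ g(x) Dⁿ(f·T)(x) dx; that is,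 the product in the Colombeau algebra of an embedded smooth function and an embedded distribution is associated to their classical product f·γ as distributions. -/
open MeasureTheory Filter

section ColombeauAux

open Topology

lemma exists_schwartz_iteratedDeriv (η : SchwartzMap ℝ ℝ) (k : ℕ) :
    ∃ ψ : SchwartzMap ℝ ℝ, ⇑ψ = iteratedDeriv k (⇑η) := by
  induction k with
  | zero => exact ⟨η, by simp [iteratedDeriv_zero]⟩
  | succ k ih =>
    obtain ⟨ψ, hψ⟩ := ih
    refine ⟨SchwartzMap.derivCLM ℝ ℝ ψ, ?_⟩
    funext x
    rw [iteratedDeriv_succ, ← hψ]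
    exact SchwartzMap.derivCLM_apply ℝ ψ x

lemma schwartz_abs_bound (ψ : SchwartzMap ℝ ℝ) : ∃ C : ℝ, 0 ≤ C ∧ ∀ x, |ψ x| ≤ C := by
  obtain ⟨C, hC0, hC⟩ := ψ.decay 0 0
  refine ⟨C, hC0.le, fun x => ?_⟩
  have := hC x
  simpa [norm_iteratedFDeriv_zero, Real.norm_eq_abs] using this

lemma iteratedDeriv_of_chain (Φ : ℕ → ℝ → ℝ)
    (h : ∀ k x, HasDerivAt (Φ k) (Φ (k+1) x) x) (n : ℕ) :
    iteratedDeriv n (Φ 0) = Φ n := by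
  induction n with
  | zero => simp [iteratedDeriv_zero]
  | succ n ih =>
    rw [iteratedDeriv_succ, ih]
    funext x
    exact (h n x).deriv

lemma tsupport_iteratedDeriv_subset' (T : ℝ → ℝ) (m : ℕ) :
    tsupport (iteratedDeriv m T) ⊆ tsupport T := by
  induction m with
  | zero => simp [iteratedDeriv_zero]
  | succ m ih =>
    rw [iteratedDeriv_succ]
    exact (closure_minimal support_deriv_subset (isClosed_tsupport _)).trans ih

lemma iterated_parts (Φ Ψ : ℕ → ℝ → ℝ)
    (hΦ : ∀ k x, HasDerivAt (Φ k) (Φ (k+1) x) x)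
    (hΨ : ∀ k x, HasDerivAt (Ψ k) (Ψ (k+1) x) x)
    (hΨc : ∀ k, HasCompactSupport (Ψ k)) (n : ℕ) :
    ∫ x, Φ n x * Ψ 0 x = (-1 : ℝ)^n * ∫ x, Φ 0 x * Ψ n x := by
  induction n generalizing Ψ with
  | zero => simp
  | succ n ih =>
    have contΦ : ∀ k, Continuous (Φ k) := fun k =>
      continuous_iff_continuousAt.2 fun x => (hΦ k x).differentiableAt.continuousAt
    have contΨ : ∀ k, Continuous (Ψ k) := fun k =>
      continuous_iff_continuousAt.2 fun x => (hΨ k x).differentiableAt.continuousAt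
    have int1 : Integrable (fun x => Φ n x * Ψ 1 x) :=
      ((contΦ n).mul (contΨ 1)).integrable_of_hasCompactSupport ((hΨc 1).mul_left)
    have int2 : Integrable (fun x => Φ (n+1) x * Ψ 0 x) :=
      ((contΦ (n+1)).mul (contΨ 0)).integrable_of_hasCompactSupport ((hΨc 0).mul_left)
    have int3 : Integrable (fun x => Φ n x * Ψ 0 x) :=
      ((contΦ n).mul (contΨ 0)).integrable_of_hasCompactSupport ((hΨc 0).mul_left)
    have step : ∫ x, Φ n x * Ψ 1 x = - ∫ x, Φ (n+1) x * Ψ 0 x :=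
      integral_mul_deriv_eq_deriv_mul_of_integrable
        (u := Φ n) (u' := Φ (n+1)) (v := Ψ 0) (v' := Ψ 1)
        (fun x _ => hΦ n x) (fun x _ => hΨ 0 x) int1 int2 int3
    have ihs := ih (fun k => Ψ (k+1)) (fun k x => hΨ (k+1) x) (fun k => hΨc (k+1))
    have h2 : ∫ x, Φ (n+1) x * Ψ 0 x = - ∫ x, Φ n x * Ψ 1 x := by rw [step]; ring
    rw [h2, ihs, pow_succ]
    ring

lemma pascal_sum' (k : ℕ) (a b : ℕ → ℝ) :
    ∑ j ∈ Finset.range (k+1), (k.choose j : ℝ) *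
        (a (j+1) * b (k-j) + a j * b (k-j+1))
      = ∑ j ∈ Finset.range (k+2), ((k+1).choose j : ℝ) * (a j * b (k+1-j)) := by
  have split : ∑ j ∈ Finset.range (k+1), (k.choose j : ℝ) *
        (a (j+1) * b (k-j) + a j * b (k-j+1))
      = (∑ j ∈ Finset.range (k+1), (k.choose j : ℝ) * (a (j+1) * b (k-j)))
        + ∑ j ∈ Finset.range (k+1), (k.choose j : ℝ) * (a j * b (k-j+1)) := by
    rw [← Finset.sum_add_distrib]; congr 1; funext j; ring
  rw [split]
  rw [Finset.sum_range_succ' (fun j => ((k+1).choose j : ℝ) * (a j * b (k+1-j))) (k+1)]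
  have hch : ∀ j, (((k+1).choose (j+1) : ℕ) : ℝ) = (k.choose j : ℝ) + (k.choose (j+1) : ℝ) := by
    intro j; rw [Nat.choose_succ_succ]; push_cast; ring
  have hsub : ∀ j, k + 1 - (j + 1) = k - j := fun j => Nat.succ_sub_succ k j
  have expand : ∑ j ∈ Finset.range (k+1), ((k+1).choose (j+1) : ℝ) * (a (j+1) * b (k+1-(j+1)))
      = (∑ j ∈ Finset.range (k+1), (k.choose j : ℝ) * (a (j+1) * b (k-j)))
        + ∑ j ∈ Finset.range (k+1), (k.choose (j+1) : ℝ) * (a (j+1) * b (k-j)) := by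
    rw [← Finset.sum_add_distrib]
    refine Finset.sum_congr rfl fun j _ => ?_
    rw [hsub j, hch j]; ring
  rw [expand]
  have key : ∑ j ∈ Finset.range (k+1), (k.choose j : ℝ) * (a j * b (k-j+1))
      = (∑ j ∈ Finset.range (k+1), (k.choose (j+1) : ℝ) * (a (j+1) * b (k-j)))
        + ((k+1).choose 0 : ℝ) * (a 0 * b (k+1-0)) := by
    rw [Finset.sum_range_succ' (fun j => (k.choose j : ℝ) * (a j * b (k-j+1))) k]
    have h1 : ∑ j ∈ Finset.range k, (k.choose (j+1) : ℝ) * (a (j+1) * b (k-(j+1)+1))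
        = ∑ j ∈ Finset.range k, (k.choose (j+1) : ℝ) * (a (j+1) * b (k-j)) := by
      refine Finset.sum_congr rfl fun j hj => ?_
      have hj' : j + 1 ≤ k := Finset.mem_range.1 hj
      have he : k - (j+1) + 1 = k - j := by omega
      rw [he]
    have h2 : ∑ j ∈ Finset.range (k+1), (k.choose (j+1) : ℝ) * (a (j+1) * b (k-j))
        = (∑ j ∈ Finset.range k, (k.choose (j+1) : ℝ) * (a (j+1) * b (k-j)))
          + (k.choose (k+1) : ℝ) * (a (k+1) * b (k-k)) := by
      rw [Finset.sum_range_succ]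
    rw [h1, h2, Nat.choose_succ_self]
    simp
  rw [key]
  ring

lemma abs_integral_le' (h : ℝ → ℝ) : |∫ x, h x| ≤ ∫ x, |h x| := by
  simpa [Real.norm_eq_abs] using norm_integral_le_integral_norm (μ := volume) h

lemma param_deriv {F F' : ℝ → ℝ → ℝ} {bound : ℝ → ℝ}
    (hF_meas : ∀ x, AEStronglyMeasurable (F x) volume)
    (hF_int : ∀ x, Integrable (F x) volume)
    (hF'_meas : ∀ x, AEStronglyMeasurable (F' x) volume)
    (h_bound : ∀ x a, |F' x a| ≤ bound a)
    (hbi : Integrable bound volume)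
    (h_diff : ∀ a x, HasDerivAt (fun x => F x a) (F' x a) x) (x₀ : ℝ) :
    HasDerivAt (fun x => ∫ a, F x a) (∫ a, F' x₀ a) x₀ :=
  (hasDerivAt_integral_of_dominated_loc_of_deriv_le (s := Set.univ) Filter.univ_mem
    (Eventually.of_forall fun x => hF_meas x) (hF_int x₀) (hF'_meas x₀)
    (Eventually.of_forall fun a x _ => (Real.norm_eq_abs _).le.trans_eq' rfl |>.trans (h_bound x a))
    hbi (Eventually.of_forall fun a x _ => h_diff a x)).2

/-- The Leibniz sum: the `k`-th derivative of `x ↦ f (x+c) * T x`. -/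
noncomputable def LS (f T : ℝ → ℝ) (k : ℕ) (c x : ℝ) : ℝ :=
  ∑ j ∈ Finset.range (k+1),
    (k.choose j : ℝ) * (iteratedDeriv j f (x+c) * iteratedDeriv (k-j) T x)

lemma LS_hasDerivAt (f T : ℝ → ℝ)
    (hdf : ∀ j : ℕ, Differentiable ℝ (iteratedDeriv j f))
    (hdT : ∀ m : ℕ, Differentiable ℝ (iteratedDeriv m T)) (k : ℕ) (c x : ℝ) :
    HasDerivAt (fun x => LS f T k c x) (LS f T (k+1) c x) x := by
  have hterm : ∀ j ∈ Finset.range (k+1), HasDerivAt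
      (fun x => (k.choose j : ℝ) * (iteratedDeriv j f (x+c) * iteratedDeriv (k-j) T x))
      ((k.choose j : ℝ) * (iteratedDeriv (j+1) f (x+c) * iteratedDeriv (k-j) T x
        + iteratedDeriv j f (x+c) * iteratedDeriv (k-j+1) T x)) x := by
    intro j _
    have hinner : HasDerivAt (fun x : ℝ => x + c) 1 x := (hasDerivAt_id x).add_const c
    have houter : HasDerivAt (iteratedDeriv j f) (iteratedDeriv (j+1) f (x+c)) (x+c) := by
      have hd := ((hdf j) (x+c)).hasDerivAt
      rw [iteratedDeriv_succ]; exact hd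
    have h1 : HasDerivAt (fun x : ℝ => iteratedDeriv j f (x+c))
        (iteratedDeriv (j+1) f (x+c)) x := by
      have h := houter.comp x hinner
      rw [mul_one] at h
      exact h
    have h2 : HasDerivAt (iteratedDeriv (k-j) T) (iteratedDeriv (k-j+1) T x) x := by
      have hd := ((hdT (k-j)) x).hasDerivAt
      rw [iteratedDeriv_succ]; exact hd
    exact (h1.mul h2).const_mul _
  have hsum := HasDerivAt.sum hterm
  simp only [LS]
  rw [← pascal_sum' k (fun j => iteratedDeriv j f (x+c)) (fun m => iteratedDeriv m T x)]
  exact hsum.congr_of_eventuallyEq (Eventually.of_forall fun y => by simp only [Finset.sum_apply])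

lemma LS_iteratedDeriv (f T : ℝ → ℝ)
    (hdf : ∀ j : ℕ, Differentiable ℝ (iteratedDeriv j f))
    (hdT : ∀ m : ℕ, Differentiable ℝ (iteratedDeriv m T)) (n : ℕ) (c : ℝ) :
    iteratedDeriv n (fun x => f (x + c) * T x) = fun x => LS f T n c x := by
  have h0 : (fun x => f (x + c) * T x) = fun x => LS f T 0 c x := by
    funext x; simp [LS]
  rw [h0]
  exact iteratedDeriv_of_chain (fun k x => LS f T k c x)
    (fun k x => LS_hasDerivAt f T hdf hdT k c x) n

end ColombeauAux

/-- Let `η` be a Colombeau mollifier (Schwartz, `∫ η = 1`, all higher moments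
vanish), `f` smooth with all derivatives bounded, `g` continuous with compact
support, and `γ_ε := (−1/ε)ⁿ ∫ (Dⁿη)(z) g(x + εz) dz` the mollified embedding of
the distribution `γ = Dⁿ g`.  Then for every smooth compactly supported `T`,
`∫ f_ε γ_ε T → (−1)ⁿ ∫ g Dⁿ(f·T)`, i.e. the Colombeau product `[f] ⊙ [γ]` is
associated to the classical product `f·γ`. -/
theorem smooth_times_distribution_associated (η : SchwartzMap ℝ ℝ)
    (hη1 : ∫ z, η z = 1) (hηn : ∀ n : ℕ, 1 ≤ n → ∫ z, z ^ n * η z = 0)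
    (f : ℝ → ℝ) (hf : ContDiff ℝ (⊤ : ℕ∞) f)
    (hfb : ∀ k : ℕ, ∃ C : ℝ, ∀ x : ℝ, |iteratedDeriv k f x| ≤ C)
    (g : ℝ → ℝ) (hg : Continuous g) (hgc : HasCompactSupport g) (n : ℕ)
    (T : ℝ → ℝ) (hT : ContDiff ℝ (⊤ : ℕ∞) T) (hTc : HasCompactSupport T) :
    Tendsto
      (fun ε : ℝ => ∫ x,
        (∫ z, η z * f (x + ε * z)) *
          ((-1 / ε) ^ n * ∫ z, iteratedDeriv n (fun z : ℝ => η z) z * g (x + ε * z)) *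
          T x)
      (nhdsWithin 0 (Set.Ioi 0))
      (nhds ((-1 : ℝ) ^ n * ∫ x, g x * iteratedDeriv n (fun x : ℝ => f x * T x) x)) := by
  classical
  -- basic bounds
  obtain ⟨Cg, hCg0, hCgb⟩ : ∃ C, 0 ≤ C ∧ ∀ x, |g x| ≤ C := by
    obtain ⟨C, hC⟩ := hg.bounded_above_of_compact_support hgc
    exact ⟨max C 0, le_max_right _ _,
      fun x => ((Real.norm_eq_abs (g x)) ▸ hC x).trans (le_max_left _ _)⟩
  have hfb' : ∀ j : ℕ, ∃ C, 0 ≤ C ∧ ∀ x, |iteratedDeriv j f x| ≤ C := by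
    intro j; obtain ⟨C, hC⟩ := hfb j
    exact ⟨max C 0, le_trans (abs_nonneg _) ((hC 0).trans (le_max_left _ _)),
      fun x => (hC x).trans (le_max_left _ _)⟩
  choose Cf hCf0 hCfb using hfb'
  have hTd : ∀ m : ℕ, HasCompactSupport (iteratedDeriv m T) := fun m =>
    IsCompact.of_isClosed_subset hTc (isClosed_tsupport _) (tsupport_iteratedDeriv_subset' T m)
  have hTb' : ∀ m : ℕ, ∃ C, 0 ≤ C ∧ ∀ x, |iteratedDeriv m T x| ≤ C := by
    intro m
    obtain ⟨C, hC⟩ :=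
      (hT.continuous_iteratedDeriv m (by exact_mod_cast le_top)).bounded_above_of_compact_support (hTd m)
    exact ⟨max C 0, le_max_right _ _,
      fun x => ((Real.norm_eq_abs _) ▸ hC x).trans (le_max_left _ _)⟩
  choose CT hCT0 hCTb using hTb'
  have hdf : ∀ j : ℕ, Differentiable ℝ (iteratedDeriv j f) :=
    fun j => hf.differentiable_iteratedDeriv j (by exact_mod_cast ENat.coe_lt_top j)
  have hdT : ∀ m : ℕ, Differentiable ℝ (iteratedDeriv m T) :=
    fun m => hT.differentiable_iteratedDeriv m (by exact_mod_cast ENat.coe_lt_top m)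
  -- bounds on the Leibniz sums
  have hSB : ∀ k : ℕ, ∃ B, 0 ≤ B ∧ ∀ c x, |LS f T k c x| ≤ B := by
    intro k
    refine ⟨∑ j ∈ Finset.range (k+1), (k.choose j : ℝ) * (Cf j * CT (k-j)), ?_, ?_⟩
    · refine Finset.sum_nonneg fun j _ => ?_
      exact mul_nonneg (Nat.cast_nonneg _) (mul_nonneg (hCf0 j) (hCT0 _))
    · intro c x
      refine (Finset.abs_sum_le_sum_abs _ _).trans (Finset.sum_le_sum fun j _ => ?_)
      rw [abs_mul, abs_mul, Nat.abs_cast]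
      exact mul_le_mul_of_nonneg_left
        (mul_le_mul (hCfb j _) (hCTb _ _) (abs_nonneg _) (hCf0 j)) (Nat.cast_nonneg _)
  have hSzero : ∀ (k : ℕ) (c x : ℝ), x ∉ tsupport T → LS f T k c x = 0 := by
    intro k c x hx
    refine Finset.sum_eq_zero fun j _ => ?_
    have hz : iteratedDeriv (k-j) T x = 0 :=
      image_eq_zero_of_notMem_tsupport (fun h => hx (tsupport_iteratedDeriv_subset' T _ h))
    rw [hz]; ring
  have hScontc : ∀ (k : ℕ) (x : ℝ), Continuous (fun c => LS f T k c x) := by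
    intro k x
    apply continuous_finset_sum
    intro j _
    exact continuous_const.mul
      (((hf.continuous_iteratedDeriv j (by exact_mod_cast le_top)).comp (continuous_const.add continuous_id)).mul
        continuous_const)
  -- the mollified product chain Ψ
  have hPchain : ∀ (ε : ℝ) (k : ℕ) (x : ℝ),
      HasDerivAt (fun x => ∫ z, η z * LS f T k (ε*z) x)
        (∫ z, η z * LS f T (k+1) (ε*z) x) x := by
    intro ε k x₀
    obtain ⟨B, hB0, hBb⟩ := hSB (k+1)
    obtain ⟨B', hB'0, hB'b⟩ := hSB k
    refine param_deriv (F := fun x z => η z * LS f T k (ε*z) x)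
      (F' := fun x z => η z * LS f T (k+1) (ε*z) x) (bound := fun z => B * |η z|)
      ?_ ?_ ?_ ?_ ?_ ?_ x₀
    · intro x
      exact (η.continuous.mul
        ((hScontc k x).comp (continuous_const.mul continuous_id))).aestronglyMeasurable
    · intro x
      refine (η.integrable.abs.const_mul B').mono'
        (η.continuous.mul
          ((hScontc k x).comp (continuous_const.mul continuous_id))).aestronglyMeasurable
        (Eventually.of_forall fun z => ?_)
      rw [Real.norm_eq_abs, abs_mul]
      calc |η z| * |LS f T k (ε*z) x| ≤ |η z| * B' := by gcongr; exact hB'b _ _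
        _ = B' * |η z| := mul_comm _ _
    · intro x
      exact (η.continuous.mul
        ((hScontc (k+1) x).comp (continuous_const.mul continuous_id))).aestronglyMeasurable
    · intro x z
      rw [abs_mul]
      calc |η z| * |LS f T (k+1) (ε*z) x| ≤ |η z| * B := by gcongr; exact hBb _ _
        _ = B * |η z| := mul_comm _ _
    · exact η.integrable.abs.const_mul B
    · intro z x
      exact (LS_hasDerivAt f T hdf hdT k (ε*z) x).const_mul (η z)
  have hPc : ∀ (ε : ℝ) (k : ℕ),
      HasCompactSupport (fun x => ∫ z, η z * LS f T k (ε*z) x) := by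
    intro ε k
    apply HasCompactSupport.intro hTc
    intro x hx
    have hz : ∀ z : ℝ, η z * LS f T k (ε*z) x = 0 := fun z => by
      rw [hSzero k (ε*z) x hx, mul_zero]
    simp only [hz, integral_zero]
  -- Schwartz derivatives of η
  choose ψ hψ using exists_schwartz_iteratedDeriv η
  choose Cψ hCψ0 hCψb using fun k => schwartz_abs_bound (ψ k)
  -- change of variables
  have cov : ∀ (φ : ℝ → ℝ) (ε : ℝ), 0 < ε → ∀ x : ℝ,
      ∫ z, φ z * g (x + ε*z) = ε⁻¹ * ∫ y, φ ((y - x)/ε) * g y := by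
    intro φ ε hε x
    have h1 : ∀ z : ℝ, φ z * g (x + ε*z)
        = (fun u => φ ((u + x - x)/ε) * g (u + x)) (ε * z) := by
      intro z
      simp only
      rw [add_sub_cancel_right, mul_div_cancel_left₀ _ (ne_of_gt hε), add_comm (ε*z) x]
    calc ∫ z, φ z * g (x + ε*z)
        = ∫ z, (fun u => φ ((u + x - x)/ε) * g (u + x)) (ε * z) := by
          congr 1; funext z; exact h1 z
      _ = |ε⁻¹| • ∫ u, φ ((u + x - x)/ε) * g (u + x) :=
          MeasureTheory.Measure.integral_comp_mul_left
            (fun u => φ ((u + x - x)/ε) * g (u + x)) ε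
      _ = ε⁻¹ * ∫ y, φ ((y - x)/ε) * g y := by
          rw [abs_of_pos (inv_pos.2 hε), smul_eq_mul]
          congr 1
          rw [← integral_add_right_eq_self (fun y => φ ((y - x)/ε) * g y) x]
  -- the embedded-distribution chain Φ
  have hΦchain : ∀ (ε : ℝ), 0 < ε → ∀ (k : ℕ) (x : ℝ),
      HasDerivAt (fun x => (-1/ε)^k * ∫ z, iteratedDeriv k (⇑η) z * g (x + ε*z))
        ((-1/ε)^(k+1) * ∫ z, iteratedDeriv (k+1) (⇑η) z * g (x + ε*z)) x := by
    intro ε hε k x₀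
    have key : ∀ x : ℝ, HasDerivAt (fun x => ∫ y, ψ k ((y - x)/ε) * g y)
        (∫ y, (-ε⁻¹) * (ψ (k+1) ((y - x)/ε) * g y)) x := by
      intro x₁
      refine param_deriv (F := fun x y => ψ k ((y - x)/ε) * g y)
        (F' := fun x y => (-ε⁻¹) * (ψ (k+1) ((y - x)/ε) * g y))
        (bound := fun y => (ε⁻¹ * Cψ (k+1)) * |g y|) ?_ ?_ ?_ ?_ ?_ ?_ x₁
      · intro x
        exact (((ψ k).continuous.comp (by fun_prop)).mul hg).aestronglyMeasurable
      · intro x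
        exact (((ψ k).continuous.comp
          (by fun_prop : Continuous fun y : ℝ => (y - x)/ε)).mul
            hg).integrable_of_hasCompactSupport hgc.mul_left
      · intro x
        exact (continuous_const.mul
          (((ψ (k+1)).continuous.comp (by fun_prop)).mul hg)).aestronglyMeasurable
      · intro x y
        rw [abs_mul, abs_mul, abs_neg, abs_inv, abs_of_pos hε]
        calc ε⁻¹ * (|ψ (k+1) ((y - x)/ε)| * |g y|)
            ≤ ε⁻¹ * (Cψ (k+1) * |g y|) := by gcongr; exact hCψb _ _
          _ = (ε⁻¹ * Cψ (k+1)) * |g y| := by ring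
      · exact (hg.abs.integrable_of_hasCompactSupport hgc.abs).const_mul _
      · intro y x
        have hinner : HasDerivAt (fun x : ℝ => (y - x)/ε) (-1/ε) x := by
          have hs : HasDerivAt (fun x : ℝ => y - x) (-1) x := (hasDerivAt_id x).const_sub y
          simpa using hs.div_const ε
        have houter : HasDerivAt (⇑(ψ k)) (ψ (k+1) ((y - x)/ε)) ((y - x)/ε) := by
          have hd := ((ψ k).differentiable.differentiableAt (x := (y - x)/ε)).hasDerivAt
          have hde : deriv (⇑(ψ k)) = ⇑(ψ (k+1)) := by
            rw [hψ k, hψ (k+1), ← iteratedDeriv_succ]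
          rwa [hde] at hd
        have hmul := (houter.comp x hinner).mul_const (g y)
        have he : -ε⁻¹ * (ψ (k+1) ((y - x)/ε) * g y) = ψ (k+1) ((y - x)/ε) * (-1/ε) * g y := by
          ring
        rw [he]; exact hmul
    have hfun : (fun x => (-1/ε)^k * ∫ z, iteratedDeriv k (⇑η) z * g (x + ε*z))
        = fun x => ((-1/ε)^k * ε⁻¹) * ∫ y, ψ k ((y - x)/ε) * g y := by
      funext x
      rw [← hψ k, cov (⇑(ψ k)) ε hε x]
      ring
    rw [hfun]
    have hder := (key x₀).const_mul ((-1/ε)^k * ε⁻¹)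
    have he : (-1/ε)^(k+1) * ∫ z, iteratedDeriv (k+1) (⇑η) z * g (x₀ + ε*z)
        = ((-1/ε)^k * ε⁻¹) * ∫ y, (-ε⁻¹) * (ψ (k+1) ((y - x₀)/ε) * g y) := by
      rw [← hψ (k+1), cov (⇑(ψ (k+1))) ε hε x₀, integral_const_mul, pow_succ]
      ring
    rw [he]; exact hder
  -- P 0 is the mollified f times T
  have P0eq : ∀ (ε x : ℝ),
      (∫ z, η z * LS f T 0 (ε*z) x) = (∫ z, η z * f (x + ε*z)) * T x := by
    intro ε x
    calc ∫ z, η z * LS f T 0 (ε*z) x = ∫ z, (η z * f (x + ε*z)) * T x := by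
          congr 1; funext z; simp [LS]; ring
      _ = (∫ z, η z * f (x + ε*z)) * T x := integral_mul_const _ _
  -- identification of the integral for positive ε
  have Ieq : ∀ ε : ℝ, ε ∈ Set.Ioi (0:ℝ) →
      (∫ x, (∫ z, η z * f (x + ε * z)) *
        ((-1 / ε) ^ n * ∫ z, iteratedDeriv n (fun z : ℝ => η z) z * g (x + ε * z)) * T x)
      = (-1:ℝ)^n * ∫ x, (∫ z, η z * g (x + ε*z)) * (∫ z, η z * LS f T n (ε*z) x) := by
    intro ε hε
    rw [Set.mem_Ioi] at hε
    have e1 : (fun x => (∫ z, η z * f (x + ε * z)) *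
        ((-1 / ε) ^ n * ∫ z, iteratedDeriv n (fun z : ℝ => η z) z * g (x + ε * z)) * T x)
        = fun x => ((-1/ε)^n * ∫ z, iteratedDeriv n (⇑η) z * g (x + ε*z))
            * (∫ z, η z * LS f T 0 (ε*z) x) := by
      funext x
      rw [P0eq ε x]
      ring
    rw [e1]
    have hparts := iterated_parts
      (fun k x => (-1/ε)^k * ∫ z, iteratedDeriv k (⇑η) z * g (x + ε*z))
      (fun k x => ∫ z, η z * LS f T k (ε*z) x)
      (fun k x => hΦchain ε hε k x) (fun k x => hPchain ε k x) (fun k => hPc ε k) n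
    rw [hparts]
    congr 1
    congr 1
    funext x
    simp [iteratedDeriv_zero]
  -- pointwise limits
  obtain ⟨Bn, hBn0, hBnb⟩ := hSB n
  have hGlim : ∀ x : ℝ,
      Tendsto (fun ε : ℝ => ∫ z, η z * g (x + ε*z)) (nhdsWithin 0 (Set.Ioi 0)) (nhds (g x)) := by
    intro x
    have key : Tendsto (fun ε : ℝ => ∫ z, η z * g (x + ε*z)) (nhdsWithin 0 (Set.Ioi 0))
        (nhds (∫ z, η z * g x)) := by
      refine tendsto_integral_filter_of_dominated_convergence (bound := fun z => Cg * |η z|)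
        ?_ ?_ ?_ ?_
      · exact Eventually.of_forall fun ε =>
          (η.continuous.mul (hg.comp (by fun_prop))).aestronglyMeasurable
      · refine Eventually.of_forall fun ε => Eventually.of_forall fun z => ?_
        rw [Real.norm_eq_abs, abs_mul]
        calc |η z| * |g (x + ε*z)| ≤ |η z| * Cg := by gcongr; exact hCgb _
          _ = Cg * |η z| := mul_comm _ _
      · exact η.integrable.abs.const_mul Cg
      · refine Eventually.of_forall fun z => ?_
        have hc : Continuous (fun ε : ℝ => η z * g (x + ε*z)) := by fun_prop
        have h0 : Tendsto (fun ε : ℝ => η z * g (x + ε*z)) (nhds 0) (nhds (η z * g x)) := by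
          simpa using hc.tendsto 0
        exact h0.mono_left nhdsWithin_le_nhds
    have hval : ∫ z, η z * g x = g x := by
      rw [integral_mul_const, hη1, one_mul]
    rwa [hval] at key
  have hPlim : ∀ x : ℝ,
      Tendsto (fun ε : ℝ => ∫ z, η z * LS f T n (ε*z) x) (nhdsWithin 0 (Set.Ioi 0))
        (nhds (LS f T n 0 x)) := by
    intro x
    have key : Tendsto (fun ε : ℝ => ∫ z, η z * LS f T n (ε*z) x) (nhdsWithin 0 (Set.Ioi 0))
        (nhds (∫ z, η z * LS f T n 0 x)) := by
      refine tendsto_integral_filter_of_dominated_convergence (bound := fun z => Bn * |η z|)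
        ?_ ?_ ?_ ?_
      · exact Eventually.of_forall fun ε =>
          (η.continuous.mul
            ((hScontc n x).comp (continuous_const.mul continuous_id))).aestronglyMeasurable
      · refine Eventually.of_forall fun ε => Eventually.of_forall fun z => ?_
        rw [Real.norm_eq_abs, abs_mul]
        calc |η z| * |LS f T n (ε*z) x| ≤ |η z| * Bn := by gcongr; exact hBnb _ _
          _ = Bn * |η z| := mul_comm _ _
      · exact η.integrable.abs.const_mul Bn
      · refine Eventually.of_forall fun z => ?_
        have hc : Continuous (fun ε : ℝ => η z * LS f T n (ε*z) x) :=
          continuous_const.mul ((hScontc n x).comp (continuous_id.mul continuous_const))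
        have h0 : Tendsto (fun ε : ℝ => η z * LS f T n (ε*z) x) (nhds 0)
            (nhds (η z * LS f T n 0 x)) := by
          simpa using hc.tendsto 0
        exact h0.mono_left nhdsWithin_le_nhds
    have hval : ∫ z, η z * LS f T n 0 x = LS f T n 0 x := by
      rw [integral_mul_const, hη1, one_mul]
    rwa [hval] at key
  -- uniform bounds
  have hIη0 : 0 ≤ ∫ z, |η z| := integral_nonneg fun z => abs_nonneg _
  have hGbound : ∀ (ε x : ℝ), |∫ z, η z * g (x + ε*z)| ≤ Cg * ∫ z, |η z| := by
    intro ε x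
    calc |∫ z, η z * g (x + ε*z)| ≤ ∫ z, |η z * g (x + ε*z)| := abs_integral_le' _
      _ ≤ ∫ z, Cg * |η z| := by
          refine integral_mono_of_nonneg (Eventually.of_forall fun z => abs_nonneg _)
            (η.integrable.abs.const_mul Cg) (Eventually.of_forall fun z => ?_)
          show |η z * g (x + ε*z)| ≤ Cg * |η z|
          rw [abs_mul]
          calc |η z| * |g (x + ε*z)| ≤ |η z| * Cg := by gcongr; exact hCgb _
            _ = Cg * |η z| := mul_comm _ _
      _ = Cg * ∫ z, |η z| := integral_const_mul _ _
  have hPbound : ∀ (ε x : ℝ), |∫ z, η z * LS f T n (ε*z) x| ≤ Bn * ∫ z, |η z| := by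
    intro ε x
    calc |∫ z, η z * LS f T n (ε*z) x| ≤ ∫ z, |η z * LS f T n (ε*z) x| :=
          abs_integral_le' _
      _ ≤ ∫ z, Bn * |η z| := by
          refine integral_mono_of_nonneg (Eventually.of_forall fun z => abs_nonneg _)
            (η.integrable.abs.const_mul Bn) (Eventually.of_forall fun z => ?_)
          show |η z * LS f T n (ε*z) x| ≤ Bn * |η z|
          rw [abs_mul]
          calc |η z| * |LS f T n (ε*z) x| ≤ |η z| * Bn := by gcongr; exact hBnb _ _
            _ = Bn * |η z| := mul_comm _ _
      _ = Bn * ∫ z, |η z| := integral_const_mul _ _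
  -- the limit of the product integral
  have hJlim : Tendsto
      (fun ε : ℝ => ∫ x, (∫ z, η z * g (x + ε*z)) * (∫ z, η z * LS f T n (ε*z) x))
      (nhdsWithin 0 (Set.Ioi 0)) (nhds (∫ x, g x * LS f T n 0 x)) := by
    refine tendsto_integral_filter_of_dominated_convergence
      (bound := fun x => ((Cg * ∫ z, |η z|) * (Bn * ∫ z, |η z|)) *
        (tsupport T).indicator (fun _ => (1:ℝ)) x) ?_ ?_ ?_ ?_
    · filter_upwards [self_mem_nhdsWithin] with ε hε
      rw [Set.mem_Ioi] at hε
      have c1 : Continuous (fun x => ∫ z, η z * g (x + ε*z)) := by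
        have hch := fun x => hΦchain ε hε 0 x
        simp only [pow_zero, one_mul, iteratedDeriv_zero] at hch
        exact continuous_iff_continuousAt.2 fun x => (hch x).differentiableAt.continuousAt
      have c2 : Continuous (fun x => ∫ z, η z * LS f T n (ε*z) x) :=
        continuous_iff_continuousAt.2 fun x => (hPchain ε n x).differentiableAt.continuousAt
      exact (c1.mul c2).aestronglyMeasurable
    · refine Eventually.of_forall fun ε => Eventually.of_forall fun x => ?_
      show ‖(∫ z, η z * g (x + ε*z)) * (∫ z, η z * LS f T n (ε*z) x)‖
        ≤ ((Cg * ∫ z, |η z|) * (Bn * ∫ z, |η z|)) * (tsupport T).indicator (fun _ => (1:ℝ)) x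
      rw [Real.norm_eq_abs, abs_mul]
      by_cases hx : x ∈ tsupport T
      · rw [Set.indicator_of_mem hx]
        calc |∫ z, η z * g (x + ε*z)| * |∫ z, η z * LS f T n (ε*z) x|
            ≤ (Cg * ∫ z, |η z|) * (Bn * ∫ z, |η z|) :=
              mul_le_mul (hGbound ε x) (hPbound ε x) (abs_nonneg _)
                (mul_nonneg hCg0 hIη0)
          _ = ((Cg * ∫ z, |η z|) * (Bn * ∫ z, |η z|)) * 1 := (mul_one _).symm
      · rw [Set.indicator_of_notMem hx, mul_zero]
        have hz : (∫ z, η z * LS f T n (ε*z) x) = 0 := by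
          have hzz : ∀ z : ℝ, η z * LS f T n (ε*z) x = 0 := fun z => by
            rw [hSzero n (ε*z) x hx, mul_zero]
          simp only [hzz, integral_zero]
        rw [hz, abs_zero, mul_zero]
    · refine Integrable.const_mul ?_ _
      rw [integrable_indicator_iff (isClosed_tsupport T).measurableSet]
      exact integrableOn_const hTc.measure_lt_top.ne
    · exact Eventually.of_forall fun x => (hGlim x).mul (hPlim x)
  -- rewrite the target
  have hfin : ∫ x, g x * iteratedDeriv n (fun x : ℝ => f x * T x) x
      = ∫ x, g x * LS f T n 0 x := by
    have h0 : (fun x : ℝ => f x * T x) = fun x => f (x + 0) * T x := by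
      funext x; rw [add_zero]
    congr 1
    funext x
    congr 1
    rw [h0, LS_iteratedDeriv f T hdf hdT n 0]
  rw [hfin]
  refine Tendsto.congr' ?_ (hJlim.const_mul ((-1:ℝ)^n))
  filter_upwards [self_mem_nhdsWithin] with ε hε
  exact (Ieq ε hε).symm
end
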